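/- arXiv:2305.06982 — 10 statements merged into one kernel-verified Lean document; each statement's English description precedes it below -/
import Mathlib

section
/- Let A ⊆ ℕ be an infinite computably enumerable set, let φ be the standard Gödel numbering, and let θ be a φ-standard numbering of S_A, i.e. a numbering of S_A for which there is a total computable d : ℕ → ℕ with θ i = φ (d i) for all i, and such that θ i = φ i whenever φ i ∈ S_A. Then θ satisfies both (QGN I) and (QGN II); in particular, every φ-standard numbering of S_A is a quasi-Gödel numbering of S_A. -/
/-- `r : ℕ →. ℕ` is an initial-segment function for `A`: its domain is empty or
equals `{m | m < a}` for some `a ∈ A`. -/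
def IsInitSeg (A : Set ℕ) (r : ℕ →. ℕ) : Prop :=
  {x : ℕ | (r x).Dom} = (∅ : Set ℕ) ∨ ∃ a ∈ A, {x : ℕ | (r x).Dom} = {m : ℕ | m < a}

/-- `SA A` is the class of unary partial functions that are either total computable
or initial-segment functions for `A`. -/
def SA (A : Set ℕ) : Set (ℕ →. ℕ) :=
  {r | (∃ f : ℕ → ℕ, Computable f ∧ ∀ x, r x = Part.some (f x)) ∨ IsInitSeg A r}

/-- The extended graph of a unary partial function. -/
def graphE (q : ℕ →. ℕ) : Set ℕ :=
  {n | ∃ y, n = Nat.pair y 0} ∪ {n | ∃ x z, q x = Part.some z ∧ n = Nat.pair x (z + 1)}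

/-- The graph of a unary partial function. -/
def pgraph (q : ℕ →. ℕ) : Set ℕ :=
  {n | ∃ x z, q x = Part.some z ∧ n = Nat.pair x z}

/-- Condition (QGN I): the extended graph of the universal function of `θ` is
enumerated by a total computable function. -/
def QGN1 (θ : ℕ → ℕ →. ℕ) : Prop :=
  ∃ h : ℕ → ℕ, Computable h ∧
    Set.range h = {n | ∃ w, n = Nat.pair w 0} ∪
      {n | ∃ i x z, θ i x = Part.some z ∧ n = Nat.pair (Nat.pair i x) (z + 1)}

/-- Condition (QGN II). -/
def QGN2 (A : Set ℕ) (θ : ℕ → ℕ →. ℕ) : Prop :=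
  ∀ k : ℕ → ℕ → ℕ, Computable₂ k →
    ∃ v : ℕ → ℕ, Computable v ∧
      ∀ i, ∀ r ∈ SA A, Set.range (k i) = graphE r → θ (v i) = r

/-- A quasi-Gödel numbering of `SA A`. -/
def QuasiGodel (A : Set ℕ) (θ : ℕ → ℕ →. ℕ) : Prop :=
  Set.range θ = SA A ∧ QGN1 θ ∧ QGN2 A θ

/-- A set of naturals is computably enumerable. -/
def CEset (C : Set ℕ) : Prop :=
  C = ∅ ∨ ∃ g : ℕ → ℕ, Computable g ∧ C = Set.range g

/-- The standard Gödel numbering of the unary partial recursive functions. -/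
def phi (i : ℕ) : ℕ →. ℕ :=
  Nat.Partrec.Code.eval (Denumerable.ofNat Nat.Partrec.Code i)

/-!
For (QGN I): `θ = φ ∘ d`, so the universal function `(i, x) ↦ θ i x` is partial recursive, and
the extended graph of any partial recursive function is enumerated by dovetailing the bounded
evaluator `evaln` over all step bounds and inputs; the entries `⟪w, 0⟫` pad the stages at which
nothing has halted yet, which is what makes the enumeration total.

For (QGN II): from an enumeration `k i` of `graphE r` one computes `r x` by searching for the
first entry of the form `⟪x, z + 1⟫`. Currying this search yields a computable `v` with
`φ (v i) = r`, and since `r ∈ S_A`, φ-standardness gives `θ (v i) = φ (v i) = r`.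
-/

open Nat.Partrec (Code)
open Nat.Partrec.Code

/-- `⟪⟪t, x⟫, w⟫` is sent to `⟪x, z + 1⟫` if `c` halts on `x` with value `z` within `t` steps,
and to the padding element `⟪w, 0⟫` otherwise. -/
def graphEnum (c : Code) (n : ℕ) : ℕ :=
  (evaln n.unpair.1.unpair.1 c n.unpair.1.unpair.2).elim (Nat.pair n.unpair.2 0)
    fun z => Nat.pair n.unpair.1.unpair.2 (z + 1)

theorem primrec_graphEnum (c : Code) : Primrec (graphEnum c) := by
  have h1 : Primrec fun n : ℕ => n.unpair.1 := Primrec.fst.comp Primrec.unpair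
  have h2 : Primrec fun n : ℕ => n.unpair.2 := Primrec.snd.comp Primrec.unpair
  refine (Primrec.option_casesOn
    (primrec_evaln.comp (((h1.comp h1).pair (Primrec.const c)).pair (h2.comp h1)))
    (Primrec₂.natPair.comp h2 (Primrec.const 0))
    (Primrec₂.natPair.comp (h2.comp (h1.comp Primrec.fst))
      (Primrec.succ.comp Primrec.snd)).to₂).of_eq fun n => ?_
  unfold graphEnum
  cases evaln n.unpair.1.unpair.1 c n.unpair.1.unpair.2 <;> rfl

theorem range_graphEnum (c : Code) : Set.range (graphEnum c) = graphE (eval c) := by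
  ext n
  constructor
  · rintro ⟨m, rfl⟩
    rcases h : evaln m.unpair.1.unpair.1 c m.unpair.1.unpair.2 with _ | z
    · exact Or.inl ⟨m.unpair.2, by simp [graphEnum, h]⟩
    · refine Or.inr ⟨_, z, Part.eq_some_iff.mpr (evaln_sound h), by simp [graphEnum, h]⟩
  · rintro (⟨w, rfl⟩ | ⟨x, z, hz, rfl⟩)
    · exact ⟨Nat.pair 0 w, by simp [graphEnum, evaln]⟩
    · obtain ⟨t, ht⟩ := evaln_complete.mp (Part.eq_some_iff.mp hz)
      exact ⟨Nat.pair (Nat.pair t x) 0, by simp [graphEnum, Option.mem_def.mp ht]⟩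

theorem exists_computable_range_eq_graphE {f : ℕ →. ℕ} (hf : Partrec f) :
    ∃ h : ℕ → ℕ, Computable h ∧ Set.range h = graphE f := by
  obtain ⟨c, rfl⟩ := exists_code.mp (Partrec.nat_iff.mp hf)
  exact ⟨graphEnum c, (primrec_graphEnum c).to_comp, range_graphEnum c⟩

theorem qgn1_of_partrec₂ {θ : ℕ → ℕ →. ℕ} (hθ : Partrec₂ θ) : QGN1 θ := by
  obtain ⟨h, hh, hrange⟩ := exists_computable_range_eq_graphE <|
    hθ.comp (Computable.fst.comp Computable.unpair) (Computable.snd.comp Computable.unpair)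
  refine ⟨h, hh, hrange.trans ?_⟩
  ext n
  simp only [graphE, Set.mem_union, Set.mem_ofPred_eq]
  refine or_congr Iff.rfl ⟨?_, ?_⟩
  · rintro ⟨x, z, hz, rfl⟩
    exact ⟨x.unpair.1, x.unpair.2, z, hz, by rw [Nat.pair_unpair]⟩
  · rintro ⟨i, x, z, hz, rfl⟩
    exact ⟨Nat.pair i x, z, by rwa [Nat.unpair_pair], rfl⟩

theorem partrec₂_phi_comp {d : ℕ → ℕ} (hd : Computable d) : Partrec₂ fun i => phi (d i) :=
  eval_part.comp ((Primrec.ofNat Code).to_comp.comp (hd.comp Computable.fst)) Computable.snd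

def graphDecode (x n : ℕ) : Option ℕ :=
  if n.unpair.1 = x ∧ n.unpair.2 ≠ 0 then some (n.unpair.2 - 1) else none

theorem graphDecode_eq_some_iff {x n z : ℕ} :
    graphDecode x n = some z ↔ n = Nat.pair x (z + 1) := by
  unfold graphDecode
  split_ifs with h
  · rw [Option.some_inj, ← Nat.pair_unpair n, Nat.pair_eq_pair, Nat.unpair_pair]
    omega
  · simp only [false_iff]
    rintro rfl
    simp at h

theorem primrec₂_graphDecode : Primrec₂ graphDecode := by
  have hfst : Primrec fun p : ℕ × ℕ => p.2.unpair.1 :=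
    Primrec.fst.comp (Primrec.unpair.comp Primrec.snd)
  have hsnd : Primrec fun p : ℕ × ℕ => p.2.unpair.2 :=
    Primrec.snd.comp (Primrec.unpair.comp Primrec.snd)
  exact Primrec.ite
    ((Primrec.eq.comp hfst Primrec.fst).and (Primrec.eq.comp hsnd (Primrec.const 0)).not)
    (Primrec.option_some.comp (Primrec.pred.comp hsnd)) (Primrec.const none)

theorem pair_succ_mem_graphE_iff {r : ℕ →. ℕ} {x z : ℕ} :
    Nat.pair x (z + 1) ∈ graphE r ↔ z ∈ r x := by
  simp [graphE, Nat.pair_eq_pair, Part.eq_some_iff]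

def graphSearch (k : ℕ → ℕ) (x : ℕ) : Part ℕ :=
  Nat.rfindOpt fun m => graphDecode x (k m)

theorem graphSearch_eq_of_range_eq_graphE {k : ℕ → ℕ} {r : ℕ →. ℕ}
    (hk : Set.range k = graphE r) (x : ℕ) : graphSearch k x = r x := by
  have mem : ∀ {z}, z ∈ graphSearch k x → z ∈ r x := by
    intro z hz
    obtain ⟨m, hm⟩ := Nat.rfindOpt_spec hz
    rw [← pair_succ_mem_graphE_iff, ← hk, ← graphDecode_eq_some_iff.mp hm]
    exact Set.mem_range_self m
  ext z
  refine ⟨mem, fun hz => ?_⟩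
  obtain ⟨m, hm⟩ : Nat.pair x (z + 1) ∈ Set.range k :=
    hk ▸ pair_succ_mem_graphE_iff.mpr hz
  have hdom : (graphSearch k x).Dom :=
    Nat.rfindOpt_dom.mpr ⟨m, z, graphDecode_eq_some_iff.mpr hm⟩
  obtain ⟨z', hz'⟩ := Part.dom_iff_mem.mp hdom
  rwa [Part.mem_unique hz (mem hz')]

theorem partrec₂_graphSearch {k : ℕ → ℕ → ℕ} (hk : Computable₂ k) :
    Partrec₂ fun i x => graphSearch (k i) x :=
  Partrec.rfindOpt <| primrec₂_graphDecode.to_comp.comp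
    (Computable.snd.comp Computable.fst)
    (hk.comp (Computable.fst.comp Computable.fst) Computable.snd)

theorem exists_computable_phi_eq_of_range_eq_graphE {k : ℕ → ℕ → ℕ} (hk : Computable₂ k) :
    ∃ v : ℕ → ℕ, Computable v ∧
      ∀ i (r : ℕ →. ℕ), Set.range (k i) = graphE r → phi (v i) = r := by
  obtain ⟨c, hc⟩ := exists_code.mp <| Partrec.nat_iff.mp <|
    (partrec₂_graphSearch hk).comp (Computable.fst.comp Computable.unpair)
      (Computable.snd.comp Computable.unpair)
  refine ⟨fun i => Encodable.encode (curry c i),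
    Computable.encode.comp (primrec₂_curry.to_comp.comp (Computable.const c) Computable.id), ?_⟩
  intro i r hr
  funext x
  rw [phi, Denumerable.ofNat_encode, eval_curry, hc]
  simp only [Nat.unpair_pair]
  exact graphSearch_eq_of_range_eq_graphE hr x

theorem phi_standard_is_quasiGodel_general (A : Set ℕ) (θ : ℕ → ℕ →. ℕ)
    (hstd : ∃ d : ℕ → ℕ, Computable d ∧ ∀ i, θ i = phi (d i))
    (hfix : ∀ i, phi i ∈ SA A → θ i = phi i) :
    QGN1 θ ∧ QGN2 A θ := by
  obtain ⟨d, hd, hθd⟩ := hstd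
  refine ⟨?_, fun k hk => ?_⟩
  · rw [show θ = fun i => phi (d i) from funext hθd]
    exact qgn1_of_partrec₂ (partrec₂_phi_comp hd)
  · obtain ⟨v, hv, hphi⟩ := exists_computable_phi_eq_of_range_eq_graphE hk
    refine ⟨v, hv, fun i r hr hgraph => ?_⟩
    rw [← hphi i r hgraph] at hr ⊢
    exact hfix (v i) hr

/-- Every φ-standard numbering of `SA A` is a quasi-Gödel numbering:
it satisfies both (QGN I) and (QGN II). -/
theorem phi_standard_is_quasiGodel (A : Set ℕ) (hAinf : A.Infinite) (hAce : CEset A)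
    (θ : ℕ → ℕ →. ℕ) (hrange : Set.range θ = SA A)
    (hstd : ∃ d : ℕ → ℕ, Computable d ∧ ∀ i, θ i = phi (d i))
    (hfix : ∀ i, phi i ∈ SA A → θ i = phi i) :
    QGN1 θ ∧ QGN2 A θ :=
  phi_standard_is_quasiGodel_general A θ hstd hfix
end

section
/- For every infinite computably enumerable set A ⊆ ℕ there is a total computable f : ℕ → ℕ such that for all i and x: if there exists a ∈ A with x < a and φ i y defined for all y < a, then φ (f i) x = φ i x; otherwise φ (f i) x is undefined. Consequently: (i) the range of λ i. φ (f i) is exactly S_A, so λ i. φ (f i) is a numbering of S_A; (ii) whenever φ i ∈ S_A one has φ (f i) = φ i; and (iii) graph(φ (f i)) ⊆ graph(φ i) for all i, where graph(q) = {Nat.pair x z | q x = Part.some z}. -/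
/-!
`φ (f i)` is `φ i` restricted to the points `x` lying below some `a ∈ A` with
`[0, a) ⊆ dom (φ i)`. This condition is `Σ₁`: it is witnessed by an index `n` with `a = g n` in
a computable enumeration `g` of `A`, together with a stage `s` by which the computations of `φ i`
on all of `[0, a)` have halted. Hence the restriction is partial recursive uniformly in `i`, and
s-m-n gives `f`. The restriction of a total function is the function itself because `A` is
unbounded; otherwise it is the initial-segment function of the largest `a ∈ A` not exceeding the
first point of divergence. Every element of `S_A` is partial recursive (initial-segment functions
have finite domain) and is fixed by the restriction, so the range is exactly `S_A`.
-/

open Nat.Partrec Code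

def InDomPrefix (A : Set ℕ) (r : ℕ →. ℕ) (x : ℕ) : Prop :=
  ∃ a ∈ A, x < a ∧ ∀ y < a, (r y).Dom

def restrictInitSeg (A : Set ℕ) (r : ℕ →. ℕ) : ℕ →. ℕ :=
  fun x => Part.assert (InDomPrefix A r x) fun _ => r x

section Restriction

variable {A : Set ℕ} {r : ℕ →. ℕ} {x : ℕ}

theorem InDomPrefix.dom (h : InDomPrefix A r x) : (r x).Dom :=
  let ⟨_, _, hxa, hdom⟩ := h
  hdom x hxa

theorem restrictInitSeg_apply_of_inDomPrefix (h : InDomPrefix A r x) :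
    restrictInitSeg A r x = r x :=
  Part.assert_pos h

theorem restrictInitSeg_dom_iff : (restrictInitSeg A r x).Dom ↔ InDomPrefix A r x :=
  ⟨fun ⟨h, _⟩ => h, fun h => ⟨h, h.dom⟩⟩

theorem pgraph_restrictInitSeg_subset : pgraph (restrictInitSeg A r) ⊆ pgraph r := by
  rintro _ ⟨x, z, hxz, rfl⟩
  have h : InDomPrefix A r x := restrictInitSeg_dom_iff.1 (hxz ▸ trivial)
  exact ⟨x, z, restrictInitSeg_apply_of_inDomPrefix h ▸ hxz, rfl⟩

theorem restrictInitSeg_eq_self (h : ∀ x, (r x).Dom → InDomPrefix A r x) :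
    restrictInitSeg A r = r := by
  funext x
  by_cases hx : (r x).Dom
  · exact restrictInitSeg_apply_of_inDomPrefix (h x hx)
  · rw [Part.eq_none_iff'.2 hx, Part.eq_none_iff']
    exact fun hd => hx (restrictInitSeg_dom_iff.1 hd).dom

theorem restrictInitSeg_eq_self_of_total (hA : A.Infinite) (htot : ∀ x, (r x).Dom) :
    restrictInitSeg A r = r :=
  restrictInitSeg_eq_self fun x _ =>
    let ⟨a, haA, hxa⟩ := hA.exists_gt x
    ⟨a, haA, hxa, fun y _ => htot y⟩

theorem restrictInitSeg_eq_self_of_isInitSeg (hr : IsInitSeg A r) : restrictInitSeg A r = r := by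
  refine restrictInitSeg_eq_self fun x hx => ?_
  rcases hr with hr | ⟨a, haA, hdom⟩
  · exact (Set.eq_empty_iff_forall_notMem.1 hr x hx).elim
  · have hdom' : ∀ y, (r y).Dom ↔ y < a := fun y => Set.ext_iff.1 hdom y
    exact ⟨a, haA, (hdom' x).1 hx, fun y hy => (hdom' y).2 hy⟩

theorem restrictInitSeg_eq_self_of_mem_SA (hA : A.Infinite) (hr : r ∈ SA A) :
    restrictInitSeg A r = r := by
  rcases hr with ⟨f, -, hf⟩ | hr
  · exact restrictInitSeg_eq_self_of_total hA fun x => by simp [hf x]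
  · exact restrictInitSeg_eq_self_of_isInitSeg hr

theorem isInitSeg_of_dom_iff {B : Set ℕ} (hBA : B ⊆ A) (hB : BddAbove B)
    (h : ∀ x, (r x).Dom ↔ ∃ b ∈ B, x < b) : IsInitSeg A r := by
  rcases B.eq_empty_or_nonempty with rfl | hne
  · left
    ext x
    simp [h]
  · right
    refine ⟨sSup B, hBA (Nat.sSup_mem hne hB), Set.ext fun x => ?_⟩
    exact (h x).trans ⟨fun ⟨b, hb, hxb⟩ => hxb.trans_le (le_csSup hB hb),
      fun hx => ⟨sSup B, Nat.sSup_mem hne hB, hx⟩⟩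

theorem isInitSeg_restrictInitSeg (hr : ¬ ∀ x, (r x).Dom) :
    IsInitSeg A (restrictInitSeg A r) := by
  classical
  rw [not_forall] at hr
  refine isInitSeg_of_dom_iff (B := {a ∈ A | a ≤ Nat.find hr}) (fun _ ha => ha.1)
    ⟨Nat.find hr, fun _ ha => ha.2⟩ fun x => ?_
  rw [restrictInitSeg_dom_iff]
  constructor
  · rintro ⟨a, haA, hxa, hdom⟩
    exact ⟨a, ⟨haA, not_lt.1 fun h => Nat.find_spec hr (hdom _ h)⟩, hxa⟩
  · rintro ⟨a, ⟨haA, ham⟩, hxa⟩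
    exact ⟨a, haA, hxa, fun y hy => not_not.1 (Nat.find_min hr (hy.trans_le ham))⟩

theorem restrictInitSeg_mem_SA (hA : A.Infinite) (hr : Partrec r) :
    restrictInitSeg A r ∈ SA A := by
  by_cases htot : ∀ x, (r x).Dom
  · left
    refine ⟨fun x => (r x).get (htot x), hr.of_eq fun x => (Part.some_get _).symm, fun x => ?_⟩
    rw [restrictInitSeg_eq_self_of_total hA htot]
    exact (Part.some_get _).symm
  · exact Or.inr (isInitSeg_restrictInitSeg htot)

theorem partrec_of_dom_bounded {n : ℕ} (h : ∀ x, (r x).Dom → x < n) : Partrec r := by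
  classical
  let l : List (Option ℕ) := (List.range n).map fun y => (r y).toOption
  have hl : ∀ x, r x = Part.ofOption (l.getD x none) := by
    intro x
    by_cases hx : x < n
    · simp [l, List.getD_eq_getElem?_getD, hx, Part.of_toOption]
    · rw [List.getD_eq_default _ _ (by simpa [l] using hx), Part.ofOption, Part.eq_none_iff']
      exact fun hd => hx (h x hd)
  have hlookup : Computable fun x => l.getD x none :=
    ((Primrec.list_getD none).comp (Primrec.const l) Primrec.id).to_comp
  exact hlookup.ofOption.of_eq fun x => (hl x).symm

theorem partrec_of_mem_SA (hr : r ∈ SA A) : Partrec r := by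
  rcases hr with ⟨f, hf, hrf⟩ | hr | ⟨a, -, hdom⟩
  · exact hf.partrec.of_eq fun x => (hrf x).symm
  · exact partrec_of_dom_bounded (n := 0) fun x hx =>
      (Set.eq_empty_iff_forall_notMem.1 hr x hx).elim
  · exact partrec_of_dom_bounded fun x hx => (Set.ext_iff.1 hdom x).1 hx

theorem partrec_phi (i : ℕ) : Partrec (phi i) :=
  eval_part.comp (Computable.const _) Computable.id

theorem exists_phi_eq (hr : Partrec r) : ∃ i, phi i = r := by
  obtain ⟨c, rfl⟩ := exists_code.1 (Partrec.nat_iff.1 hr)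
  exact ⟨Encodable.encode c, by simp [phi]⟩

theorem range_restrictInitSeg_phi (hA : A.Infinite) :
    Set.range (fun i => restrictInitSeg A (phi i)) = SA A := by
  refine Set.Subset.antisymm ?_ fun r hr => ?_
  · rintro _ ⟨i, rfl⟩
    exact restrictInitSeg_mem_SA hA (partrec_phi i)
  · obtain ⟨i, rfl⟩ := exists_phi_eq (partrec_of_mem_SA hr)
    exact ⟨i, restrictInitSeg_eq_self_of_mem_SA hA hr⟩

end Restriction

theorem ComputablePred.rePred_exists {α β : Type*} [Primcodable α] [Denumerable β]
    {p : α → β → Prop} (hp : ComputablePred fun q : α × β => p q.1 q.2) :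
    REPred fun a => ∃ b, p a b := by
  obtain ⟨f, hf, hpf⟩ := ComputablePred.computable_iff.1 hp
  have hsearch : Partrec fun a =>
      Nat.rfind (fun n => Part.some (f (a, Denumerable.ofNat β n)) : ℕ →. Bool) :=
    Partrec.rfind <|
      (hf.comp (Computable.fst.pair ((Computable.ofNat β).comp Computable.snd))).partrec
  have hpf' : ∀ a b, p a b ↔ f (a, b) = true := fun a b => Iff.of_eq (congrFun hpf (a, b))
  refine hsearch.dom_re.of_eq fun a => ⟨fun h => ?_, fun ⟨b, hb⟩ => ?_⟩
  · have hn := Nat.rfind_spec (Part.get_mem h)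
    exact ⟨_, (hpf' _ _).2 (Part.mem_some_iff.1 hn).symm⟩
  · refine Nat.rfind_dom.2 ⟨Encodable.encode b, ?_, fun _ => trivial⟩
    simpa [Part.mem_some_iff] using ((hpf' a b).1 hb).symm

theorem Partrec.assert {α σ : Type*} [Primcodable α] [Primcodable σ] {p : α → Prop}
    {f : α →. σ} (hp : REPred p) (hf : Partrec f) :
    Partrec fun a => Part.assert (p a) fun _ => f a :=
  (hp.bind (hf.comp Computable.fst).to₂).of_eq fun a => by
    by_cases h : p a <;> simp [h, Part.assert_pos, Part.assert_neg]

theorem forall_lt_eval_dom_iff {c : Code} {m : ℕ} :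
    (∀ y < m, (eval c y).Dom) ↔ ∃ s, ∀ y < m, (evaln s c y).isSome := by
  constructor
  · intro h
    have hstage : ∀ y < m, ∃ k, (evaln k c y).isSome := fun y hy =>
      let ⟨z, hz⟩ := Part.dom_iff_mem.1 (h y hy)
      let ⟨k, hk⟩ := evaln_complete.1 hz
      ⟨k, Option.isSome_iff_exists.2 ⟨z, hk⟩⟩
    choose! k hk using hstage
    refine ⟨(Finset.range m).sup k, fun y hy => ?_⟩
    obtain ⟨z, hz⟩ := Option.isSome_iff_exists.1 (hk y hy)
    exact Option.isSome_iff_exists.2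
      ⟨z, evaln_mono (Finset.le_sup (f := k) (Finset.mem_range.2 hy)) hz⟩
  · rintro ⟨s, hs⟩ y hy
    obtain ⟨z, hz⟩ := Option.isSome_iff_exists.1 (hs y hy)
    exact Part.dom_iff_mem.2 ⟨z, evaln_sound hz⟩

theorem inDomPrefix_range_eval_iff {g : ℕ → ℕ} {c : Code} {x : ℕ} :
    InDomPrefix (Set.range g) (eval c) x ↔
      ∃ ns : ℕ × ℕ, x < g ns.1 ∧ ∀ y < g ns.1, (evaln ns.2 c y).isSome := by
  simp only [InDomPrefix, Set.exists_range_iff, forall_lt_eval_dom_iff, Prod.exists,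
    exists_and_left]

theorem computablePred_stagewise_inDomPrefix {g : ℕ → ℕ} (hg : Computable g) :
    ComputablePred fun q : (ℕ × ℕ) × (ℕ × ℕ) =>
      q.1.2 < g q.2.1 ∧
        ∀ y < g q.2.1, (evaln q.2.2 (Denumerable.ofNat Code q.1.1) y).isSome := by
  have hhalts : PrimrecRel fun (y : ℕ) (sc : ℕ × Code) => (evaln sc.1 sc.2 y).isSome := by
    refine Primrec₂.primrecRel ?_
    exact (Primrec.option_isSome.comp (primrec_evaln.comp (Primrec.snd.pair Primrec.fst))).of_eq
      fun _ => by simp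
  have hedge : Computable fun q : (ℕ × ℕ) × (ℕ × ℕ) => g q.2.1 :=
    hg.comp (Computable.fst.comp Computable.snd)
  have hlt := Primrec.nat_lt.decide.to_comp.comp (Computable.snd.comp Computable.fst) hedge
  have hallHalt : PrimrecRel fun (m : ℕ) (sc : ℕ × Code) =>
      ∀ y ∈ List.range m, (evaln sc.1 sc.2 y).isSome :=
    hhalts.forall_mem_list.comp (Primrec.list_range.comp Primrec.fst) Primrec.snd
  have hall := hallHalt.decide.to_comp.comp hedge
    ((Computable.snd.comp Computable.snd).pair
      ((Computable.ofNat Code).comp (Computable.fst.comp Computable.fst)))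
  exact Computable.computablePred ((Primrec.and.to_comp.comp hlt hall).of_eq fun _ => by simp)

theorem rePred_inDomPrefix_phi {g : ℕ → ℕ} (hg : Computable g) :
    REPred fun p : ℕ × ℕ => InDomPrefix (Set.range g) (phi p.1) p.2 :=
  (computablePred_stagewise_inDomPrefix hg).rePred_exists.of_eq fun _ =>
    inDomPrefix_range_eval_iff.symm

theorem exists_computable_phi_eq_of_partrec₂ {F : ℕ → ℕ →. ℕ} (hF : Partrec₂ F) :
    ∃ f : ℕ → ℕ, Computable f ∧ ∀ i, phi (f i) = F i := by
  have hF' : Partrec fun n : ℕ => F n.unpair.1 n.unpair.2 :=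
    hF.comp (Computable.fst.comp Computable.unpair) (Computable.snd.comp Computable.unpair)
  obtain ⟨c, hc⟩ := exists_code.1 (Partrec.nat_iff.1 hF')
  obtain ⟨s, hs, hseval⟩ := smn
  refine ⟨fun i => Encodable.encode (s c i),
    Computable.encode.comp (hs.comp (Computable.const c) Computable.id),
    fun i => funext fun x => ?_⟩
  simp [phi, hseval, hc]

theorem exists_computable_phi_eq_restrictInitSeg {g : ℕ → ℕ} (hg : Computable g) :
    ∃ f : ℕ → ℕ, Computable f ∧
      ∀ i, phi (f i) = restrictInitSeg (Set.range g) (phi i) :=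
  exists_computable_phi_eq_of_partrec₂ <| Partrec.assert (rePred_inDomPrefix_phi hg) <|
    eval_part.comp ((Computable.ofNat Code).comp Computable.fst) Computable.snd

/-- There is a total computable `f` transforming every Gödel index `i` into an index of
the restriction of `phi i` to the maximal initial segment with edge length in `A`
contained in its domain; the resulting enumeration is a special φ-standard numbering
of `SA A`. -/
theorem exists_special_standard_numbering (A : Set ℕ) (hAinf : A.Infinite) (hAce : CEset A) :
    ∃ f : ℕ → ℕ, Computable f ∧
      (∀ i x,
        ((∃ a ∈ A, x < a ∧ ∀ y < a, (phi i y).Dom) → phi (f i) x = phi i x) ∧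
        (¬ (∃ a ∈ A, x < a ∧ ∀ y < a, (phi i y).Dom) → ¬ (phi (f i) x).Dom)) ∧
      Set.range (fun i => phi (f i)) = SA A ∧
      (∀ i, phi i ∈ SA A → phi (f i) = phi i) ∧
      (∀ i, pgraph (phi (f i)) ⊆ pgraph (phi i)) := by
  obtain ⟨g, hg, rfl⟩ : ∃ g : ℕ → ℕ, Computable g ∧ A = Set.range g :=
    hAce.resolve_left hAinf.nonempty.ne_empty
  obtain ⟨f, hf, hphi⟩ := exists_computable_phi_eq_restrictInitSeg hg
  refine ⟨f, hf, ?_⟩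
  simp only [hphi]
  exact ⟨fun i x => ⟨restrictInitSeg_apply_of_inDomPrefix,
      fun h hd => h (restrictInitSeg_dom_iff.1 hd)⟩,
    range_restrictInitSeg_phi hAinf, fun _ => restrictInitSeg_eq_self_of_mem_SA hAinf,
    fun _ => pgraph_restrictInitSeg_subset⟩
end

section
/- (Normal Form Theorem) Let A ⊆ ℕ be an infinite computably enumerable set and let θ be a numbering of S_A satisfying (QGN I). Then there exist a total computable q : ℕ → ℕ and a decidable computable relation T ⊆ ℕ × ℕ × ℕ such that for all i and x: θ i x is defined if and only if there is y with T(i,x,y), and in that case θ i x = Part.some (q y₀) where y₀ is the least y with T(i,x,y); equivalently, θ i x = Part.map q (Nat.rfind (λ y. T(i,x,y))). -/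
/-!
Enumerate the extended graph of `(i, x) ↦ θ i x` by the total computable `h` from (QGN I).
An entry `⟨⟨i, x⟩, z + 1⟩` records the value `θ i x = z`, while the padding entries `⟨w, 0⟩`
(which keep the enumeration total even when `θ` is nowhere defined) are recognised by their
second component and skipped. So `T i x y` tests whether the `y`-th entry records a value at
`(i, x)`, and `q` reads the value off that entry; since `θ` is single-valued, any such entry,
in particular the first one, carries the right value.
-/

namespace GraphE

def witness (h : ℕ → ℕ) (x y : ℕ) : Bool :=
  decide ((h y).unpair.1 = x ∧ (h y).unpair.2 ≠ 0)

def value (h : ℕ → ℕ) (y : ℕ) : ℕ :=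
  (h y).unpair.2 - 1

variable {h : ℕ → ℕ}

theorem computable_value (hc : Computable h) : Computable (value h) :=
  (Primrec.nat_sub.comp (Primrec.snd.comp Primrec.unpair) (Primrec.const 1)).to_comp.comp hc

theorem computable₂_witness (hc : Computable h) : Computable₂ (witness h) := by
  have hdec : Primrec₂ fun n x : ℕ => decide (n.unpair.1 = x ∧ n.unpair.2 ≠ 0) :=
    PrimrecPred.decide <| PrimrecPred.and
      (Primrec.eq.comp (Primrec.fst.comp (Primrec.unpair.comp Primrec.fst)) Primrec.snd)
      (PrimrecPred.not <| Primrec.eq.comp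
        (Primrec.snd.comp (Primrec.unpair.comp Primrec.fst)) (Primrec.const 0))
  exact hdec.to_comp.comp (hc.comp Computable.snd) Computable.fst

variable {g : ℕ →. ℕ}

theorem eq_some_value_of_witness (hh : Set.range h = graphE g) {x y : ℕ}
    (hw : witness h x y = true) : g x = Part.some (value h y) := by
  obtain ⟨hx, hpos⟩ := of_decide_eq_true hw
  obtain ⟨w, hw0⟩ | ⟨x', z, hz, hxz⟩ := hh ▸ Set.mem_range_self (f := h) y
  · exact absurd (by rw [hw0, Nat.unpair_pair]) hpos
  · rw [hxz, Nat.unpair_pair] at hx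
    simpa [value, hxz, ← hx] using hz

theorem exists_witness_of_eq_some (hh : Set.range h = graphE g) {x z : ℕ}
    (hz : g x = Part.some z) : ∃ y, witness h x y = true := by
  obtain ⟨y, hy⟩ : Nat.pair x (z + 1) ∈ Set.range h := hh ▸ Or.inr ⟨x, z, hz, rfl⟩
  exact ⟨y, decide_eq_true (by simp [hy])⟩

theorem dom_iff_exists_witness (hh : Set.range h = graphE g) (x : ℕ) :
    (g x).Dom ↔ ∃ y, witness h x y = true := by
  refine ⟨fun hd => exists_witness_of_eq_some hh (Part.eq_some_iff.mpr (Part.get_mem hd)), ?_⟩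
  rintro ⟨y, hw⟩
  rw [eq_some_value_of_witness hh hw]
  trivial

theorem eq_map_value_rfind (hh : Set.range h = graphE g) (x : ℕ) :
    g x = Part.map (value h) (Nat.rfind fun y => Part.some (witness h x y)) := by
  have of_mem_rfind {y : ℕ} (hy : y ∈ Nat.rfind fun y => Part.some (witness h x y)) :
      g x = Part.some (value h y) :=
    eq_some_value_of_witness hh (Part.mem_some_iff.mp (Nat.rfind_spec hy)).symm
  ext z
  rw [Part.mem_map_iff]
  constructor
  · intro hz
    obtain ⟨y, hy⟩ := (dom_iff_exists_witness hh x).mp (Part.dom_iff_mem.mpr ⟨z, hz⟩)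
    obtain ⟨y₀, hy₀⟩ := Part.dom_iff_mem.mp <|
      Nat.rfind_dom'.mpr ⟨y, Part.mem_some_iff.mpr hy.symm, fun _ => Part.some_dom _⟩
    refine ⟨y₀, hy₀, ?_⟩
    rw [of_mem_rfind hy₀] at hz
    exact (Part.mem_some_iff.mp hz).symm
  · rintro ⟨y, hy, rfl⟩
    rw [of_mem_rfind hy]
    exact Part.mem_some _

end GraphE

theorem graphE_uncurry (θ : ℕ → ℕ →. ℕ) :
    graphE (fun n => θ n.unpair.1 n.unpair.2) = {n | ∃ w, n = Nat.pair w 0} ∪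
      {n | ∃ i x z, θ i x = Part.some z ∧ n = Nat.pair (Nat.pair i x) (z + 1)} := by
  ext n
  simp only [graphE, Set.mem_union, Set.mem_ofPred_eq]
  refine or_congr_right ⟨?_, ?_⟩
  · rintro ⟨m, z, hz, rfl⟩
    exact ⟨_, _, z, hz, by rw [Nat.pair_unpair]⟩
  · rintro ⟨i, x, z, hz, rfl⟩
    exact ⟨Nat.pair i x, z, by simpa using hz, rfl⟩

theorem normal_form_general (θ : ℕ → ℕ →. ℕ) (h1 : QGN1 θ) :
    ∃ q : ℕ → ℕ, Computable q ∧
      ∃ T : ℕ → ℕ → ℕ → Bool,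
        Computable (fun p : ℕ × ℕ × ℕ => T p.1 p.2.1 p.2.2) ∧
        (∀ i x, (θ i x).Dom ↔ ∃ y, T i x y = true) ∧
        (∀ i x, θ i x = Part.map q (Nat.rfind (fun y => Part.some (T i x y)))) := by
  obtain ⟨h, hc, hrange⟩ := h1
  rw [← graphE_uncurry] at hrange
  refine ⟨GraphE.value h, GraphE.computable_value hc,
    fun i x => GraphE.witness h (Nat.pair i x), ?_, fun i x => ?_, fun i x => ?_⟩
  · exact (GraphE.computable₂_witness hc).comp
      (Primrec₂.natPair.to_comp.comp Computable.fst (Computable.fst.comp Computable.snd))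
      (Computable.snd.comp Computable.snd)
  · simpa using GraphE.dom_iff_exists_witness hrange (Nat.pair i x)
  · simpa using GraphE.eq_map_value_rfind hrange (Nat.pair i x)

/-- Normal Form Theorem for numberings of `SA A` satisfying (QGN I). -/
theorem normal_form (A : Set ℕ) (hAinf : A.Infinite) (hAce : CEset A)
    (θ : ℕ → ℕ →. ℕ) (hrange : Set.range θ = SA A) (h1 : QGN1 θ) :
    ∃ q : ℕ → ℕ, Computable q ∧
      ∃ T : ℕ → ℕ → ℕ → Bool,
        Computable (fun p : ℕ × ℕ × ℕ => T p.1 p.2.1 p.2.2) ∧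
        (∀ i x, (θ i x).Dom ↔ ∃ y, T i x y = true) ∧
        (∀ i x, θ i x = Part.map q (Nat.rfind (fun y => Part.some (T i x y)))) :=
  normal_form_general θ h1
end

section
/- (Enumeration Theorem) Let A ⊆ ℕ be an infinite computably enumerable set and let θ be a numbering of S_A satisfying (QGN I). Then there is a total computable k : ℕ → ℕ → ℕ such that for every i, Set.range (k i) = graphₑ(θ i), i.e. λ t. k i t enumerates the extended graph of θ i, uniformly in i. -/
/-- Enumeration Theorem: the extended graphs of the functions `θ i` can be enumerated
uniformly by a total computable function. -/
theorem enumeration_theorem (A : Set ℕ) (hAinf : A.Infinite) (hAce : CEset A)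
    (θ : ℕ → ℕ →. ℕ) (hrange : Set.range θ = SA A) (h1 : QGN1 θ) :
    ∃ k : ℕ → ℕ → ℕ, Computable₂ k ∧ ∀ i, Set.range (k i) = graphE (θ i) := by
  obtain ⟨h, hcomp, hran⟩ := h1
  classical
  set k : ℕ → ℕ → ℕ := fun i t =>
    if (h t.unpair.1).unpair.2 ≠ 0 ∧ (h t.unpair.1).unpair.1.unpair.1 = i then
      Nat.pair (h t.unpair.1).unpair.1.unpair.2 (h t.unpair.1).unpair.2
    else Nat.pair t.unpair.2 0 with hk
  refine ⟨k, ?_, ?_⟩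
  · -- computability
    have hF : Primrec (fun p : ℕ × ℕ =>
        if p.2.unpair.2 ≠ 0 ∧ p.2.unpair.1.unpair.1 = p.1.unpair.1 then
          Nat.pair p.2.unpair.1.unpair.2 p.2.unpair.2
        else Nat.pair p.1.unpair.2.unpair.2 0) := by
      apply Primrec.ite
      · apply PrimrecPred.and
        · exact (PrimrecPred.not
            (Primrec.eq.comp (Primrec.snd.comp (Primrec.unpair.comp Primrec.snd))
              (Primrec.const 0)))
        · exact Primrec.eq.comp
            (Primrec.fst.comp (Primrec.unpair.comp
              (Primrec.fst.comp (Primrec.unpair.comp Primrec.snd))))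
            (Primrec.fst.comp (Primrec.unpair.comp Primrec.fst))
      · exact Primrec₂.natPair.comp
          (Primrec.snd.comp (Primrec.unpair.comp
            (Primrec.fst.comp (Primrec.unpair.comp Primrec.snd))))
          (Primrec.snd.comp (Primrec.unpair.comp Primrec.snd))
      · exact Primrec₂.natPair.comp
          (Primrec.snd.comp (Primrec.unpair.comp
            (Primrec.snd.comp (Primrec.unpair.comp Primrec.fst))))
          (Primrec.const 0)
    have hG : Computable (fun p : ℕ × ℕ => (Nat.pair p.1 p.2, h p.2.unpair.1)) :=
      Computable.pair
        (Primrec.to_comp (Primrec₂.natPair.comp Primrec.fst Primrec.snd))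
        (hcomp.comp (Primrec.to_comp (Primrec.fst.comp (Primrec.unpair.comp Primrec.snd))))
    have : Computable (fun p : ℕ × ℕ => k p.1 p.2) := by
      have := (hF.to_comp).comp hG
      convert this using 1
      funext p
      simp [hk]
    exact this
  · intro i
    ext n
    constructor
    · rintro ⟨t, rfl⟩
      by_cases hc : (h t.unpair.1).unpair.2 ≠ 0 ∧ (h t.unpair.1).unpair.1.unpair.1 = i
      · have hmem : h t.unpair.1 ∈ Set.range h := ⟨t.unpair.1, rfl⟩
        rw [hran] at hmem
        rcases hmem with ⟨w, hw⟩ | ⟨i', x, z, hθ, hn⟩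
        · exfalso; apply hc.1; rw [hw]; simp
        · have h1' : (h t.unpair.1).unpair.1 = Nat.pair i' x := by rw [hn]; simp
          have h2' : (h t.unpair.1).unpair.2 = z + 1 := by rw [hn]; simp
          have hi : i' = i := by
            have := hc.2
            rw [h1'] at this; simpa using this
          right
          refine ⟨x, z, ?_, ?_⟩
          · rw [← hi]; exact hθ
          · simp [hk, if_pos hc, h1', h2']
      · left
        exact ⟨t.unpair.2, by simp [hk, if_neg hc]⟩
    · rintro (⟨y, rfl⟩ | ⟨x, z, hθ, rfl⟩)
      · have : Nat.pair 0 0 ∈ Set.range h := by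
          rw [hran]; left; exact ⟨0, rfl⟩
        obtain ⟨s, hs⟩ := this
        refine ⟨Nat.pair s y, ?_⟩
        have hc : ¬((h (Nat.pair s y).unpair.1).unpair.2 ≠ 0 ∧
            (h (Nat.pair s y).unpair.1).unpair.1.unpair.1 = i) := by
          simp [hs]
        simp [hk, if_neg hc]
      · have : Nat.pair (Nat.pair i x) (z + 1) ∈ Set.range h := by
          rw [hran]; right; exact ⟨i, x, z, hθ, rfl⟩
        obtain ⟨s, hs⟩ := this
        refine ⟨Nat.pair s 0, ?_⟩
        have hc : ((h (Nat.pair s 0).unpair.1).unpair.2 ≠ 0 ∧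
            (h (Nat.pair s 0).unpair.1).unpair.1.unpair.1 = i) := by
          simp [hs]
        simp [hk, if_pos hc, hs]
end

section
/- (smn-Theorem) Let A ⊆ ℕ be an infinite computably enumerable set. Let θ be a numbering of S_A satisfying (QGN II), and let Θ be a numbering of S²_A satisfying the binary condition (QGN I), i.e. some total computable h : ℕ → ℕ has range equal to {Nat.pair w 0 | w ∈ ℕ} ∪ {Nat.pair (Nat.pair i (Nat.pair y x)) (z+1) | Θ i (y,x) = Part.some z}. Then there is a total computable s : ℕ → ℕ → ℕ such that for all i, y, x: θ (s i y) x = Θ i (y, x). -/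
/-- The class of binary partial functions whose domain is all of `ℕ × ℕ` with the
function total computable, or empty, or an initial square segment with edge length
in `A`. -/
def SA2 (A : Set ℕ) : Set ((ℕ × ℕ) →. ℕ) :=
  {r | (∃ f : ℕ × ℕ → ℕ, Computable f ∧ ∀ p, r p = Part.some (f p)) ∨
       ({p : ℕ × ℕ | (r p).Dom} = (∅ : Set (ℕ × ℕ)) ∨
        ∃ a ∈ A, {p : ℕ × ℕ | (r p).Dom} = {p : ℕ × ℕ | p.1 < a ∧ p.2 < a})}

/-- Condition (QGN I) for a numbering of binary partial functions. -/
def QGN1two (Θ : ℕ → (ℕ × ℕ) →. ℕ) : Prop :=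
  ∃ h : ℕ → ℕ, Computable h ∧
    Set.range h = {n | ∃ w, n = Nat.pair w 0} ∪
      {n | ∃ i y x z, Θ i (y, x) = Part.some z ∧
        n = Nat.pair (Nat.pair i (Nat.pair y x)) (z + 1)}

def primF (q : ℕ × ℕ) : ℕ :=
  if q.2.unpair.2 = 0 then q.2
  else if q.2.unpair.1.unpair.1 = q.1.unpair.1 ∧ q.2.unpair.1.unpair.2.unpair.1 = q.1.unpair.2
    then Nat.pair q.2.unpair.1.unpair.2.unpair.2 q.2.unpair.2 else 0

lemma primF_primrec : Primrec primF := by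
  unfold primF
  refine Primrec.ite ?_ Primrec.snd ?_
  · exact PrimrecRel.comp Primrec.eq (Primrec.snd.comp (Primrec.unpair.comp Primrec.snd))
      (Primrec.const 0)
  · refine Primrec.ite ?_ ?_ (Primrec.const 0)
    · refine PrimrecPred.and ?_ ?_
      · exact PrimrecRel.comp Primrec.eq
          (Primrec.fst.comp (Primrec.unpair.comp (Primrec.fst.comp (Primrec.unpair.comp Primrec.snd))))
          (Primrec.fst.comp (Primrec.unpair.comp Primrec.fst))
      · exact PrimrecRel.comp Primrec.eq
          (Primrec.fst.comp (Primrec.unpair.comp (Primrec.snd.comp (Primrec.unpair.comp (Primrec.fst.comp (Primrec.unpair.comp Primrec.snd))))))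
          (Primrec.snd.comp (Primrec.unpair.comp Primrec.fst))
    · exact Primrec₂.natPair.comp
        (Primrec.snd.comp (Primrec.unpair.comp (Primrec.snd.comp (Primrec.unpair.comp (Primrec.fst.comp (Primrec.unpair.comp Primrec.snd))))))
        (Primrec.snd.comp (Primrec.unpair.comp Primrec.snd))

/-- smn-Theorem. -/
theorem smn_theorem (A : Set ℕ) (hAinf : A.Infinite) (hAce : CEset A)
    (θ : ℕ → ℕ →. ℕ) (hrange : Set.range θ = SA A) (h2 : QGN2 A θ)
    (Θ : ℕ → (ℕ × ℕ) →. ℕ) (hrange2 : Set.range Θ = SA2 A) (H1 : QGN1two Θ) :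
    ∃ s : ℕ → ℕ → ℕ, Computable₂ s ∧ ∀ i y x, θ (s i y) x = Θ i (y, x) := by
  obtain ⟨h, hh, hrh⟩ := H1
  -- the k-function
  set k : ℕ → ℕ → ℕ := fun j n => primF (j, h n) with hkdef
  have hk : Computable₂ k :=
    primF_primrec.to_comp.comp (Computable.fst.pair (hh.comp Computable.snd))
  obtain ⟨v, hv, hvspec⟩ := h2 k hk
  refine ⟨fun i y => v (Nat.pair i y), ?_, ?_⟩
  · exact hv.comp (Primrec₂.natPair.to_comp : Computable₂ Nat.pair)
  · intro i y x
    set r : ℕ →. ℕ := fun x => Θ i (y, x) with hrdef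
    -- r ∈ SA A
    have hrSA : r ∈ SA A := by
      have hΘi : Θ i ∈ SA2 A := hrange2 ▸ Set.mem_range_self i
      rcases hΘi with ⟨f, hf, hfeq⟩ | hdom | ⟨a, haA, hdom⟩
      · left
        exact ⟨fun x => f (y, x), hf.comp ((Computable.const y).pair Computable.id),
          fun x => hfeq (y, x)⟩
      · right; left
        ext x
        simp only [Set.mem_setOf_eq, Set.mem_empty_iff_false, iff_false]
        intro hd
        have : (y, x) ∈ ({p : ℕ × ℕ | (Θ i p).Dom}) := hd
        rw [hdom] at this
        exact this
      · right
        by_cases hy : y < a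
        · right
          refine ⟨a, haA, ?_⟩
          ext x
          have : ((y, x) ∈ {p : ℕ × ℕ | (Θ i p).Dom}) ↔ ((y, x) ∈ {p : ℕ × ℕ | p.1 < a ∧ p.2 < a}) := by
            rw [hdom]
          simpa [hy] using this
        · left
          ext x
          have : ((y, x) ∈ {p : ℕ × ℕ | (Θ i p).Dom}) ↔ ((y, x) ∈ {p : ℕ × ℕ | p.1 < a ∧ p.2 < a}) := by
            rw [hdom]
          simp only [Set.mem_setOf_eq] at this
          simp only [Set.mem_setOf_eq, Set.mem_empty_iff_false, iff_false]
          intro hd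
          exact hy (this.mp hd).1
    -- range equality
    have hres : Set.range (k (Nat.pair i y)) = graphE r := by
      ext u
      constructor
      · rintro ⟨n, hn⟩
        have hmem : h n ∈ Set.range h := Set.mem_range_self n
        rw [hrh] at hmem
        rcases hmem with ⟨w, hw⟩ | ⟨i', y', x', z, hz, hw⟩
        · left
          refine ⟨w, ?_⟩
          rw [← hn]
          simp [hkdef, primF, hw]
        · by_cases hc : i' = i ∧ y' = y
          · right
            refine ⟨x', z, ?_, ?_⟩
            · rw [hrdef]; rw [← hc.1, ← hc.2]; exact hz
            · rw [← hn]
              simp only [hkdef, primF, hw, Nat.unpair_pair]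
              simp [hc.1, hc.2]
          · left
            refine ⟨0, ?_⟩
            rw [← hn]
            have : k (Nat.pair i y) n = 0 := by
              simp only [hkdef, primF, hw, Nat.unpair_pair]
              simp only [Nat.add_eq_zero, and_false, if_false, Nat.succ_ne_zero]
              rw [if_neg]
              intro hc'
              exact hc ⟨hc'.1, hc'.2⟩
            rw [this]
            rfl
      · rintro (⟨w, hw⟩ | ⟨x', z, hz, hw⟩)
        · have : Nat.pair w 0 ∈ Set.range h := by
            rw [hrh]; left; exact ⟨w, rfl⟩
          obtain ⟨n, hn⟩ := this
          exact ⟨n, by simp [hkdef, primF, hn, hw]⟩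
        · have : Nat.pair (Nat.pair i (Nat.pair y x')) (z + 1) ∈ Set.range h := by
            rw [hrh]; right; exact ⟨i, y, x', z, hz, rfl⟩
          obtain ⟨n, hn⟩ := this
          refine ⟨n, ?_⟩
          simp [hkdef, primF, hn, hw]
    have := hvspec (Nat.pair i y) r hrSA hres
    rw [this]
end

section
/- (Recursion Theorem, fixed-point form with parameters) Let A ⊆ ℕ be an infinite computably enumerable set and let θ be a quasi-Gödel numbering of S_A. Then for every total computable f : ℕ → ℕ → ℕ there is a total computable e : ℕ → ℕ such that for all y: θ (f (e y) y) = θ (e y). -/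
/-!
Condition (QGN I) makes the universal function of `θ` partial recursive, so Kleene's
recursion theorem with parameters for the standard numbering `phi` yields a computable `a`
with `phi (a y) = θ (f (v (a y)) y)`, where `v` is the translation of `phi`-indices into
`θ`-indices provided by (QGN II). Then `phi (a y)` is a value of `θ`, hence lies in `S_A`, so
(QGN II) gives `θ (v (a y)) = phi (a y)`, and `e := v ∘ a` is the required fixed point.
-/

open Nat.Partrec (Code)
open Nat.Partrec.Code

theorem partrec_of_range_eq_graphE {F : ℕ →. ℕ} {h : ℕ → ℕ} (hh : Computable h)
    (hrange : Set.range h = graphE F) : Partrec F := by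
  set hit : ℕ → ℕ → Bool := fun q n => decide ((h n).unpair.1 = q ∧ 0 < (h n).unpair.2)
  have hit_sound : ∀ q n, hit q n = true → (h n).unpair.2 - 1 ∈ F q := by
    intro q n hn
    obtain ⟨hq, hpos⟩ : (h n).unpair.1 = q ∧ 0 < (h n).unpair.2 := by simpa [hit] using hn
    rcases (hrange ▸ Set.mem_range_self n : h n ∈ graphE F) with ⟨y, hy⟩ | ⟨x, z, hz, hxz⟩
    · simp [hy] at hpos
    · simp only [hxz, Nat.unpair_pair] at hq ⊢
      simp [← hq, hz]
  have hF : F = fun q => (Nat.rfind fun n => Part.some (hit q n)).map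
      fun n => (h n).unpair.2 - 1 := by
    funext q
    refine Part.ext fun z => ⟨fun hz => ?_, fun hz => ?_⟩
    · obtain ⟨n, hn⟩ : Nat.pair q (z + 1) ∈ Set.range h :=
        hrange ▸ Or.inr ⟨q, z, Part.eq_some_iff.2 hz, rfl⟩
      have hdom : (Nat.rfind fun n => Part.some (hit q n)).Dom :=
        Nat.rfind_dom.2 ⟨n, by simp [hit, hn], fun _ => trivial⟩
      obtain ⟨m, hm⟩ := Part.dom_iff_mem.1 hdom
      have hzm := Part.mem_unique (hit_sound q m (by simpa using Nat.rfind_spec hm)) hz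
      exact (Part.mem_map_iff _).2 ⟨m, hm, hzm⟩
    · obtain ⟨n, hn, rfl⟩ := (Part.mem_map_iff _).1 hz
      exact hit_sound q n (by simpa using Nat.rfind_spec hn)
  have hhu : Computable fun p : ℕ × ℕ => (h p.2).unpair := Computable.unpair.comp (hh.comp .snd)
  have hhit : Computable₂ hit := by
    have hpred : Primrec fun t : ℕ × ℕ × ℕ => decide (t.1 = t.2.1 ∧ 0 < t.2.2) :=
      (PrimrecPred.and (Primrec.eq.comp Primrec.fst (Primrec.fst.comp Primrec.snd))
        (Primrec.nat_lt.comp (Primrec.const 0) (Primrec.snd.comp Primrec.snd))).decide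
    exact (hpred.to_comp.comp ((Computable.fst.comp hhu).pair
      (Computable.fst.pair (Computable.snd.comp hhu)))).of_eq fun _ => rfl
  rw [hF]
  exact (Partrec.rfind hhit.partrec₂).map
    (Primrec.pred.to_comp.comp (Computable.snd.comp hhu)).to₂

theorem QGN1.partrec₂ {θ : ℕ → ℕ →. ℕ} (hθ : QGN1 θ) : Partrec₂ θ := by
  obtain ⟨h, hh, hrange⟩ := hθ
  have hgraph : Set.range h = graphE fun n => θ n.unpair.1 n.unpair.2 := by
    rw [hrange]
    unfold graphE
    congr 1
    ext n
    constructor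
    · rintro ⟨i, x, z, hz, rfl⟩
      exact ⟨Nat.pair i x, z, by simpa using hz, rfl⟩
    · rintro ⟨q, z, hz, rfl⟩
      exact ⟨q.unpair.1, q.unpair.2, z, hz, by rw [Nat.pair_unpair]⟩
  exact ((partrec_of_range_eq_graphE hh hgraph).comp Primrec₂.natPair.to_comp).of_eq
    fun p => by simp

/-- Even `n` list the padding pairs `(n / 2, 0)`; odd `n` run `phi c` on input `x` for `s` steps,
where `n / 2 = Nat.pair s x`, and fall back to the padding pair `(0, 0)` on divergence. -/
def phiGraphEEnum (c n : ℕ) : ℕ :=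
  if n % 2 = 0 then Nat.pair (n / 2) 0
  else
    Option.casesOn (evaln (n / 2).unpair.1 (Denumerable.ofNat Code c) (n / 2).unpair.2)
      (Nat.pair 0 0) fun z => Nat.pair (n / 2).unpair.2 (z + 1)

theorem primrec₂_phiGraphEEnum : Primrec₂ phiGraphEEnum := by
  have hu : Primrec fun p : ℕ × ℕ => (p.2 / 2).unpair :=
    Primrec.unpair.comp (Primrec.nat_div.comp Primrec.snd (Primrec.const 2))
  refine Primrec.ite (Primrec.eq.comp (Primrec.nat_mod.comp Primrec.snd (Primrec.const 2))
    (Primrec.const 0)) (Primrec₂.natPair.comp (Primrec.nat_div.comp Primrec.snd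
      (Primrec.const 2)) (Primrec.const 0)) ?_
  exact Primrec.option_casesOn (primrec_evaln.comp
      (((Primrec.fst.comp hu).pair ((Primrec.ofNat Code).comp Primrec.fst)).pair
        (Primrec.snd.comp hu)))
    (Primrec.const (Nat.pair 0 0))
    (Primrec₂.natPair.comp (Primrec.snd.comp (hu.comp Primrec.fst))
      (Primrec.succ.comp Primrec.snd))

theorem range_phiGraphEEnum (c : ℕ) : Set.range (phiGraphEEnum c) = graphE (phi c) := by
  ext n
  constructor
  · rintro ⟨m, rfl⟩
    by_cases hm : m % 2 = 0
    · exact Or.inl ⟨m / 2, by simp [phiGraphEEnum, hm]⟩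
    rcases he : evaln (m / 2).unpair.1 (Denumerable.ofNat Code c) (m / 2).unpair.2 with _ | z
    · exact Or.inl ⟨0, by simp [phiGraphEEnum, hm, he]⟩
    · exact Or.inr ⟨(m / 2).unpair.2, z, Part.eq_some_iff.2 (evaln_sound (by simpa using he)),
        by simp [phiGraphEEnum, hm, he]⟩
  · rintro (⟨y, rfl⟩ | ⟨x, z, hz, rfl⟩)
    · exact ⟨2 * y, by simp [phiGraphEEnum]⟩
    · obtain ⟨s, hs⟩ := evaln_complete.1 (Part.eq_some_iff.1 hz)
      refine ⟨2 * Nat.pair s x + 1, ?_⟩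
      have hodd : (2 * Nat.pair s x + 1) % 2 = 1 := by omega
      have hhalf : (2 * Nat.pair s x + 1) / 2 = Nat.pair s x := by omega
      simp [phiGraphEEnum, hodd, hhalf, Option.mem_def.1 hs]

theorem QGN2.exists_computable_phi_translation {A : Set ℕ} {θ : ℕ → ℕ →. ℕ} (hθ : QGN2 A θ) :
    ∃ v : ℕ → ℕ, Computable v ∧ ∀ j, phi j ∈ SA A → θ (v j) = phi j := by
  obtain ⟨v, hv, hvspec⟩ := hθ phiGraphEEnum primrec₂_phiGraphEEnum.to_comp
  exact ⟨v, hv, fun j hj => hvspec j _ hj (range_phiGraphEEnum j)⟩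

theorem exists_phi_eq_param_fixed_point {θ : ℕ → ℕ →. ℕ} (hθ : Partrec₂ θ) {t : ℕ → ℕ → ℕ}
    (ht : Computable₂ t) : ∃ a : ℕ → ℕ, Computable a ∧ ∀ y, phi (a y) = θ (t (a y) y) := by
  set index : Code → ℕ → ℕ := fun d y => Encodable.encode (curry d y)
  have hindex : Computable₂ index := (Primrec.encode.comp primrec₂_curry).to_comp
  have hF : Partrec₂ fun (d : Code) (p : ℕ) => θ (t (index d p.unpair.1) p.unpair.1) p.unpair.2 :=
    have hp : Computable fun q : Code × ℕ => q.2.unpair := Computable.unpair.comp .snd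
    hθ.comp (ht.comp (hindex.comp .fst (Computable.fst.comp hp)) (Computable.fst.comp hp))
      (Computable.snd.comp hp)
  obtain ⟨c, hc⟩ := fixed_point₂ hF
  refine ⟨index c, hindex.comp (.const c) .id, fun y => funext fun x => ?_⟩
  simp only [phi, index, Denumerable.ofNat_encode, eval_curry, hc, Nat.unpair_pair]

theorem recursion_theorem_general (A : Set ℕ)
    (θ : ℕ → ℕ →. ℕ) (hθ : QuasiGodel A θ)
    (f : ℕ → ℕ → ℕ) (hf : Computable₂ f) :
    ∃ e : ℕ → ℕ, Computable e ∧ ∀ y, θ (f (e y) y) = θ (e y) := by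
  obtain ⟨hrange, hθ₁, hθ₂⟩ := hθ
  obtain ⟨v, hv, hvphi⟩ := hθ₂.exists_computable_phi_translation
  obtain ⟨a, ha, hfix⟩ := exists_phi_eq_param_fixed_point hθ₁.partrec₂
    (t := fun j y => f (v j) y) (hf.comp (hv.comp .fst) .snd)
  refine ⟨v ∘ a, hv.comp ha, fun y => ?_⟩
  have hmem : phi (a y) ∈ SA A := hrange ▸ hfix y ▸ Set.mem_range_self _
  rw [Function.comp_apply, hvphi _ hmem, hfix y]

/-- Recursion Theorem (fixed-point form with parameters). -/
theorem recursion_theorem (A : Set ℕ) (hAinf : A.Infinite) (hAce : CEset A)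
    (θ : ℕ → ℕ →. ℕ) (hθ : QuasiGodel A θ)
    (f : ℕ → ℕ → ℕ) (hf : Computable₂ f) :
    ∃ e : ℕ → ℕ, Computable e ∧ ∀ y, θ (f (e y) y) = θ (e y) :=
  recursion_theorem_general A θ hθ f hf
end

section
/- (Rice's Theorem for S_A) Let A ⊆ ℕ be an infinite computably enumerable set, let θ be a quasi-Gödel numbering of S_A, and let C ⊆ S_A. Then the index set {i : ℕ | θ i ∈ C} is computable (i.e. its membership predicate is decidable by a computable function) if and only if C = ∅ or C = S_A. -/
/-!
Rice's argument, reducing the halting problem. Suppose `p ∈ C` but the nowhere-defined function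
`⊥` is not in `C`. Every member of `SA A` is the coercion of a computable `ℕ → Option ℕ` (an
initial-segment function has finite domain), so `graphE p` has a computable enumeration `e`.
For a code `c`, list the padding pairs `⟨y, 0⟩` and, from the stage at which `c` is seen to halt
on `0`, the values of `e`: this lists `graphE p` if `c` halts on `0` and `graphE ⊥` otherwise.
By (QGN II) these lists receive uniformly computable `θ`-indices, so deciding `θ i ∈ C` would
decide the halting problem. If instead `⊥ ∈ C`, the same applies to `SA A \ C`.
-/

open Nat.Partrec (Code)
open Nat.Partrec.Code

theorem exists_computable_option_of_dom_eq_Iio {p : ℕ →. ℕ} {a : ℕ}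
    (hdom : {x | (p x).Dom} = {m | m < a}) :
    ∃ o : ℕ → Option ℕ, Computable o ∧ p = fun x => (o x : Part ℕ) := by
  have hdom' : ∀ x, (p x).Dom ↔ x < a := fun x => Set.ext_iff.1 hdom x
  let L := List.ofFn fun i : Fin a => (p i).get ((hdom' i).2 i.isLt)
  refine ⟨fun x => L[x]?, (Primrec.list_getElem?₁ L).to_comp, funext fun x => ?_⟩
  by_cases hx : x < a
  · simp [L, hx]
  · simp [L, hx, Part.eq_none_iff', hdom']

theorem exists_computable_option_of_mem_SA {A : Set ℕ} {p : ℕ →. ℕ} (hp : p ∈ SA A) :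
    ∃ o : ℕ → Option ℕ, Computable o ∧ p = fun x => (o x : Part ℕ) := by
  rcases hp with ⟨f, hf, hpf⟩ | hdom | ⟨a, -, hdom⟩
  · exact ⟨fun x => some (f x), Computable.option_some.comp hf, funext fun x => by simp [hpf]⟩
  · exact exists_computable_option_of_dom_eq_Iio (a := 0) (by simpa using hdom)
  · exact exists_computable_option_of_dom_eq_Iio hdom

def enumGraphE (o : ℕ → Option ℕ) (n : ℕ) : ℕ :=
  Nat.pair n.unpair.1 (Nat.casesOn n.unpair.2 0 fun _ => (o n.unpair.1).elim 0 Nat.succ)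

theorem computable_enumGraphE {o : ℕ → Option ℕ} (ho : Computable o) :
    Computable (enumGraphE o) := by
  have hx : Computable fun n : ℕ => n.unpair.1 := Computable.fst.comp Computable.unpair
  have hval : Computable fun n : ℕ => (o n.unpair.1).elim 0 Nat.succ :=
    (Computable.option_casesOn (ho.comp hx) (Computable.const 0)
      (Computable.succ.comp Computable.snd).to₂).of_eq fun n => by cases o n.unpair.1 <;> rfl
  exact Primrec₂.natPair.to_comp.comp hx
    (Computable.nat_casesOn (Computable.snd.comp Computable.unpair) (Computable.const 0)
      (hval.comp Computable.fst).to₂)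

theorem range_enumGraphE (o : ℕ → Option ℕ) :
    Set.range (enumGraphE o) = graphE fun x => (o x : Part ℕ) := by
  ext n
  constructor
  · rintro ⟨m, rfl⟩
    unfold enumGraphE
    generalize m.unpair.1 = x
    cases m.unpair.2 with
    | zero => exact Or.inl ⟨x, rfl⟩
    | succ =>
      cases hx : o x with
      | none => exact Or.inl ⟨x, rfl⟩
      | some z => exact Or.inr ⟨x, z, by simp [hx], rfl⟩
  · rintro (⟨y, rfl⟩ | ⟨x, z, hz, rfl⟩)
    · exact ⟨Nat.pair y 0, by simp [enumGraphE]⟩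
    · have : o x = some z := by simpa [Part.eq_some_iff, Part.mem_ofOption] using hz
      exact ⟨Nat.pair x 1, by simp [enumGraphE, this]⟩

def enumIfHalts (e : ℕ → ℕ) (c : Code) (n : ℕ) : ℕ :=
  bif (evaln n.unpair.1 c 0).isSome then e n.unpair.2 else Nat.pair n.unpair.2 0

theorem computable₂_enumIfHalts {e : ℕ → ℕ} (he : Computable e) :
    Computable₂ (enumIfHalts e) := by
  have hstage : Computable fun q : Code × ℕ => q.2.unpair.1 :=
    Computable.fst.comp (Computable.unpair.comp Computable.snd)
  have hy : Computable fun q : Code × ℕ => q.2.unpair.2 :=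
    Computable.snd.comp (Computable.unpair.comp Computable.snd)
  have hhalted : Computable fun q : Code × ℕ => (evaln q.2.unpair.1 q.1 0).isSome :=
    Primrec.option_isSome.to_comp.comp <| primrec_evaln.to_comp.comp <|
      (hstage.pair Computable.fst).pair (Computable.const 0)
  exact hhalted.cond (he.comp hy) (Primrec₂.natPair.to_comp.comp hy (Computable.const 0))

theorem range_enumIfHalts_of_dom {e : ℕ → ℕ} {c : Code} (hc : (eval c 0).Dom)
    (he : ∀ y, Nat.pair y 0 ∈ Set.range e) : Set.range (enumIfHalts e c) = Set.range e := by
  obtain ⟨s, hs⟩ := evaln_complete.1 (Part.get_mem hc)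
  refine subset_antisymm ?_ fun _ ⟨m, hm⟩ => ⟨Nat.pair s m, ?_⟩
  · rintro _ ⟨n, rfl⟩
    unfold enumIfHalts
    cases (evaln n.unpair.1 c 0).isSome
    · exact he _
    · exact Set.mem_range_self _
  · simp [enumIfHalts, Option.mem_def.1 hs, hm]

theorem range_enumIfHalts_of_not_dom (e : ℕ → ℕ) {c : Code} (hc : ¬(eval c 0).Dom) :
    Set.range (enumIfHalts e c) = {n | ∃ y, n = Nat.pair y 0} := by
  have hrun : ∀ s, evaln s c 0 = none := fun s =>
    Option.eq_none_iff_forall_not_mem.2 fun x hx => hc (Part.dom_iff_mem.2 ⟨x, evaln_sound hx⟩)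
  ext n
  simp only [enumIfHalts, hrun, Option.isSome_none, cond_false, Set.mem_range]
  exact ⟨fun ⟨m, hm⟩ => ⟨m.unpair.2, hm.symm⟩, fun ⟨y, hy⟩ => ⟨Nat.pair 0 y, by simp [hy]⟩⟩

theorem ComputablePred.comp {α β : Type*} [Primcodable α] [Primcodable β] {p : β → Prop}
    {f : α → β} (hp : ComputablePred p) (hf : Computable f) : ComputablePred (p ∘ f) := by
  obtain ⟨_, hp⟩ := hp
  exact ⟨inferInstance, hp.comp hf⟩

theorem not_computablePred_mem_of_nowhere_defined_not_mem {A : Set ℕ} {θ : ℕ → ℕ →. ℕ}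
    (hθ : QGN2 A θ) {C : Set (ℕ →. ℕ)} (hC : C ⊆ SA A)
    (hbot : (fun _ => Part.none : ℕ →. ℕ) ∉ C) (hne : C.Nonempty) :
    ¬ComputablePred fun i => θ i ∈ C := by
  obtain ⟨p, hp⟩ := hne
  obtain ⟨o, ho, rfl⟩ := exists_computable_option_of_mem_SA (hC hp)
  obtain ⟨v, hv, hθv⟩ := hθ (fun i => enumIfHalts (enumGraphE o) (Denumerable.ofNat Code i))
    ((computable₂_enumIfHalts (computable_enumGraphE ho)).comp
      (Computable.ofNat Code |>.comp Computable.fst) Computable.snd)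
  have hreduce : ∀ c : Code, θ (v (Encodable.encode c)) ∈ C ↔ (eval c 0).Dom := by
    intro c
    by_cases hc : (eval c 0).Dom
    · have hgraph : ∀ y, Nat.pair y 0 ∈ Set.range (enumGraphE o) := fun y =>
        (range_enumGraphE o).symm ▸ Or.inl ⟨y, rfl⟩
      rw [hθv _ _ (hC hp) (by simpa [range_enumGraphE] using range_enumIfHalts_of_dom hc hgraph)]
      exact iff_of_true hp hc
    · rw [hθv _ (fun _ => Part.none) (Or.inr (Or.inl (by simp))) (by
        simpa [graphE] using range_enumIfHalts_of_not_dom (enumGraphE o) hc)]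
      exact iff_of_false hbot hc
  intro hdec
  exact ComputablePred.halting_problem 0 <|
    (hdec.comp (hv.comp Computable.encode)).of_eq hreduce

theorem rice_theorem_general (A : Set ℕ)
    (θ : ℕ → ℕ →. ℕ) (hθ : QuasiGodel A θ)
    (C : Set (ℕ →. ℕ)) (hC : C ⊆ SA A) :
    ComputablePred (fun i => θ i ∈ C) ↔ C = ∅ ∨ C = SA A := by
  obtain ⟨hrange, -, hθ₂⟩ := hθ
  have hmem : ∀ i, θ i ∈ SA A := fun i => hrange ▸ Set.mem_range_self i
  constructor
  · intro hdec
    by_contra! hproper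
    by_cases hbot : (fun _ => Part.none : ℕ →. ℕ) ∈ C
    · have hcompl : (SA A \ C).Nonempty :=
        Set.sdiff_nonempty.2 fun h => hproper.2 (hC.antisymm h)
      exact not_computablePred_mem_of_nowhere_defined_not_mem hθ₂ Set.sdiff_subset
        (fun h => h.2 hbot) hcompl (hdec.not.of_eq fun i => ⟨fun h => ⟨hmem i, h⟩, fun h => h.2⟩)
    · exact not_computablePred_mem_of_nowhere_defined_not_mem hθ₂ hC hbot hproper.1 hdec
  · rintro (rfl | rfl)
    · exact ComputablePred.computable_iff.2 ⟨_, Computable.const false, by ext; simp⟩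
    · exact ComputablePred.computable_iff.2 ⟨_, Computable.const true, by ext; simp [hmem]⟩

/-- Rice's Theorem for `SA A`. -/
theorem rice_theorem (A : Set ℕ) (hAinf : A.Infinite) (hAce : CEset A)
    (θ : ℕ → ℕ →. ℕ) (hθ : QuasiGodel A θ)
    (C : Set (ℕ →. ℕ)) (hC : C ⊆ SA A) :
    ComputablePred (fun i => θ i ∈ C) ↔ C = ∅ ∨ C = SA A :=
  rice_theorem_general A θ hθ C hC
end

section
/- (No effective domain-length function) Let A ⊆ ℕ be an infinite computably enumerable set and let θ be a quasi-Gödel numbering of S_A. Then there is no total computable p : ℕ → ℕ such that for every i with θ i an initial-segment function for A, the domain of θ i equals {m | m < p i}, i.e. p i is the length of the initial segment on which θ i is defined. -/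
/-!
Given a stage predicate `S`, build uniformly in `c` a function `r_c ∈ S_A` that is `0` on an
initial segment growing with the stage `t` as long as `S c` has not fired, and that freezes on
`{m | m < a}` for some `a ∈ A` with `a ≥ s` once `S c s` holds. The extended graphs of the `r_c`
are uniformly enumerable, so (QGN II) yields a computable `v` with `θ (v c) = r_c`. A computable
length function `p` would then give: `S c` never fires iff `r_c` is total iff `p (v c)` lies in
the domain of `r_c`, an r.e. condition. Taking for `S` the halting stages of `φ_c(0)` makes the
complement of the halting problem r.e., which is impossible.
-/

theorem Computable₂.rePred_exists {α : Type*} [Primcodable α] {f : α → ℕ → Bool}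
    (hf : Computable₂ f) : REPred fun a => ∃ n, f a n = true :=
  have hrfind : Partrec fun a => Nat.rfind fun n => (Part.some (f a n) : Part Bool) :=
    Partrec.rfind hf.partrec₂
  hrfind.dom_re.of_eq fun a => Nat.rfind_dom.trans (by simp)

theorem CEset.exists_computable_ge_mem {A : Set ℕ} (hAinf : A.Infinite) (hAce : CEset A) :
    ∃ α : ℕ → ℕ, Computable α ∧ ∀ s, α s ∈ A ∧ s ≤ α s := by
  obtain hA | ⟨g, hg, rfl⟩ := hAce
  · exact absurd (hA ▸ Set.finite_empty) hAinf
  have hunb : ∀ s, ∃ u, s ≤ g u := by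
    intro s
    by_contra! h
    exact hAinf ((Set.finite_Iio s).subset (Set.range_subset_iff.2 h))
  have hle : ComputablePred fun q : ℕ × ℕ => q.1 ≤ g q.2 :=
    ((Primrec₂.to_comp Primrec.nat_le.decide).comp Computable.fst
      (hg.comp Computable.snd)).computablePred
  exact ⟨fun s => g (Nat.find (hunb s)), hg.comp (Computable.find hle hunb),
    fun s => ⟨⟨_, rfl⟩, Nat.find_spec (hunb s)⟩⟩

open Nat.Partrec (Code)

theorem Nat.Partrec.Code.eval_dom_iff_exists_evaln_isSome {c : Code} {n : ℕ} :
    (c.eval n).Dom ↔ ∃ k, (evaln k c n).isSome := by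
  simp only [Option.isSome_iff_exists, Part.dom_iff_mem, evaln_complete]
  exact exists_comm

theorem computable₂_evaln_ofNat_isSome (n : ℕ) :
    Computable₂ fun c k => (Code.evaln k (Denumerable.ofNat Code c) n).isSome :=
  (Primrec.option_isSome.comp <| Code.primrec_evaln.comp <|
    (Primrec.snd.pair ((Primrec.ofNat Code).comp Primrec.fst)).pair (Primrec.const n)).to_comp

section SegmentFun

variable (S : ℕ → ℕ → Bool) (α : ℕ → ℕ)

def cappedHitTime (c t : ℕ) : ℕ :=
  Nat.find (⟨t, Or.inl rfl⟩ : ∃ n, n = t ∨ S c n = true)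

def lengthApprox (c t : ℕ) : ℕ :=
  if cappedHitTime S c t < t then α (cappedHitTime S c t) else t

def segmentFun (c : ℕ) : ℕ →. ℕ := fun x =>
  Part.assert (∃ t, x < lengthApprox S α c t) fun _ => Part.some 0

-- Stage `0` contributes every `Nat.pair x 0`, as `lengthApprox S α c 0 = 0`.
def segmentEnum (c n : ℕ) : ℕ :=
  Nat.pair n.unpair.1 (if n.unpair.1 < lengthApprox S α c n.unpair.2 then 1 else 0)

variable {S α}

theorem cappedHitTime_of_exists {c : ℕ} (h : ∃ t, S c t = true) (t : ℕ) :
    cappedHitTime S c t = min t (Nat.find h) := by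
  refine le_antisymm (le_min (Nat.find_min' _ (Or.inl rfl))
    (Nat.find_min' _ (Or.inr (Nat.find_spec h)))) ?_
  rcases Nat.find_spec (⟨t, Or.inl rfl⟩ : ∃ n, n = t ∨ S c n = true) with hn | hn
  · exact (min_le_left _ _).trans_eq hn.symm
  · exact min_le_of_right_le (Nat.find_min' h hn)

theorem cappedHitTime_of_not_exists {c : ℕ} (h : ¬∃ t, S c t = true) (t : ℕ) :
    cappedHitTime S c t = t :=
  (Nat.find_spec (⟨t, Or.inl rfl⟩ : ∃ n, n = t ∨ S c n = true)).resolve_right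
    fun hn => h ⟨_, hn⟩

theorem computable₂_lengthApprox (hS : Computable₂ S) (hα : Computable α) :
    Computable₂ (lengthApprox S α) := by
  have hstop : ComputablePred fun q : (ℕ × ℕ) × ℕ => q.2 = q.1.2 ∨ S q.1.1 q.2 = true :=
    (((Primrec.or.to_comp : Computable₂ or).comp
      ((Primrec.eq.decide.to_comp : Computable₂ fun a b : ℕ => decide (a = b)).comp
        Computable.snd (Computable.snd.comp Computable.fst))
      (hS.comp (Computable.fst.comp Computable.fst) Computable.snd)).of_eq
        fun q => by simp).computablePred
  have hhit : Computable fun q : ℕ × ℕ => cappedHitTime S q.1 q.2 :=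
    Computable.find hstop fun q => ⟨q.2, Or.inl rfl⟩
  have hlt : Computable fun q : ℕ × ℕ => decide (cappedHitTime S q.1 q.2 < q.2) :=
    (Primrec.nat_lt.decide.to_comp : Computable₂ fun a b : ℕ => decide (a < b)).comp
      hhit Computable.snd
  show Computable fun q : ℕ × ℕ => lengthApprox S α q.1 q.2
  exact (Computable.cond hlt (hα.comp hhit) Computable.snd).of_eq
    fun q => by simp [lengthApprox, Bool.cond_decide]

theorem computable₂_segmentEnum (hS : Computable₂ S) (hα : Computable α) :
    Computable₂ (segmentEnum S α) := by
  have hx : Computable fun q : ℕ × ℕ => q.2.unpair.1 :=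
    (Primrec.fst.comp (Primrec.unpair.comp Primrec.snd)).to_comp
  have ht : Computable fun q : ℕ × ℕ => q.2.unpair.2 :=
    (Primrec.snd.comp (Primrec.unpair.comp Primrec.snd)).to_comp
  have hlt : Computable fun q : ℕ × ℕ =>
      decide (q.2.unpair.1 < lengthApprox S α q.1 q.2.unpair.2) :=
    (Primrec.nat_lt.decide.to_comp : Computable₂ fun a b : ℕ => decide (a < b)).comp
      hx ((computable₂_lengthApprox hS hα).comp Computable.fst ht)
  show Computable fun q : ℕ × ℕ => segmentEnum S α q.1 q.2
  exact ((Primrec₂.natPair.to_comp : Computable₂ Nat.pair).comp hx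
    (Computable.cond hlt (Computable.const 1) (Computable.const 0))).of_eq
    fun q => by simp [segmentEnum, Bool.cond_decide]

theorem segmentFun_dom_iff {c x : ℕ} :
    (segmentFun S α c x).Dom ↔ ∃ t, x < lengthApprox S α c t :=
  ⟨fun ⟨h, _⟩ => h, fun h => ⟨h, trivial⟩⟩

theorem segmentFun_eq_some_iff {c x z : ℕ} :
    segmentFun S α c x = Part.some z ↔ (∃ t, x < lengthApprox S α c t) ∧ z = 0 := by
  rw [Part.eq_some_iff, segmentFun, Part.mem_assert_iff]
  simp

theorem dom_segmentFun_of_exists (hα : ∀ s, s ≤ α s) {c : ℕ} (h : ∃ t, S c t = true) :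
    {x | (segmentFun S α c x).Dom} = {m | m < α (Nat.find h)} := by
  ext x
  simp only [Set.mem_ofPred_eq, segmentFun_dom_iff, lengthApprox, cappedHitTime_of_exists h]
  constructor
  · rintro ⟨t, ht⟩
    have := hα (Nat.find h)
    split_ifs at ht with hlt
    · rwa [min_eq_right (by omega)] at ht
    · omega
  · intro hx
    exact ⟨Nat.find h + 1, by simpa using hx⟩

theorem segmentFun_of_not_exists {c : ℕ} (h : ¬∃ t, S c t = true) (x : ℕ) :
    segmentFun S α c x = Part.some 0 :=
  Part.assert_pos ⟨x + 1, by simp [lengthApprox, cappedHitTime_of_not_exists h]⟩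

theorem isInitSeg_segmentFun {A : Set ℕ} (hα : ∀ s, α s ∈ A ∧ s ≤ α s) {c : ℕ}
    (h : ∃ t, S c t = true) : IsInitSeg A (segmentFun S α c) :=
  Or.inr ⟨_, (hα _).1, dom_segmentFun_of_exists (fun s => (hα s).2) h⟩

theorem segmentFun_mem_SA {A : Set ℕ} (hα : ∀ s, α s ∈ A ∧ s ≤ α s) (c : ℕ) :
    segmentFun S α c ∈ SA A := by
  by_cases h : ∃ t, S c t = true
  · exact Or.inr (isInitSeg_segmentFun hα h)
  · exact Or.inl ⟨fun _ => 0, Computable.const 0, segmentFun_of_not_exists h⟩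

theorem range_segmentEnum (c : ℕ) :
    Set.range (segmentEnum S α c) = graphE (segmentFun S α c) := by
  ext y
  simp only [graphE, Set.mem_union, Set.mem_range, Set.mem_ofPred_eq]
  constructor
  · rintro ⟨n, rfl⟩
    unfold segmentEnum
    split_ifs with h
    · exact Or.inr ⟨n.unpair.1, 0, segmentFun_eq_some_iff.2 ⟨⟨_, h⟩, rfl⟩, rfl⟩
    · exact Or.inl ⟨_, rfl⟩
  · rintro (⟨x, rfl⟩ | ⟨x, z, hxz, rfl⟩)
    · exact ⟨Nat.pair x 0, by simp [segmentEnum, lengthApprox]⟩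
    · obtain ⟨⟨t, ht⟩, rfl⟩ := segmentFun_eq_some_iff.1 hxz
      exact ⟨Nat.pair x t, by simp [segmentEnum, ht]⟩

end SegmentFun

theorem rePred_not_exists_of_effective_length {A : Set ℕ} {θ : ℕ → ℕ →. ℕ} (hθ : QGN2 A θ)
    {p : ℕ → ℕ} (hpc : Computable p)
    (hp : ∀ i, IsInitSeg A (θ i) → {x : ℕ | (θ i x).Dom} = {m : ℕ | m < p i})
    {α : ℕ → ℕ} (hαc : Computable α) (hα : ∀ s, α s ∈ A ∧ s ≤ α s)
    {S : ℕ → ℕ → Bool} (hS : Computable₂ S) :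
    REPred fun c => ¬∃ t, S c t = true := by
  obtain ⟨v, hvc, hv⟩ := hθ _ (computable₂_segmentEnum hS hαc)
  have hθv : ∀ c, θ (v c) = segmentFun S α c := fun c =>
    hv c _ (segmentFun_mem_SA hα c) (range_segmentEnum c)
  -- `p (v c)` lies outside the domain of `θ (v c)` exactly when that domain is a proper segment
  have hkey : ∀ c, (¬∃ t, S c t = true) ↔ ∃ t, p (v c) < lengthApprox S α c t := by
    intro c
    rw [← segmentFun_dom_iff]
    by_cases h : ∃ t, S c t = true
    · have hlen := hp (v c) (hθv c ▸ isInitSeg_segmentFun hα h)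
      rw [hθv c] at hlen
      simpa [h] using (Set.ext_iff.1 hlen (p (v c))).not
    · simp [h, segmentFun_of_not_exists h]
  have hlt : Computable₂ fun c t => decide (p (v c) < lengthApprox S α c t) :=
    (Primrec.nat_lt.decide.to_comp : Computable₂ fun a b : ℕ => decide (a < b)).comp
      (hpc.comp (hvc.comp Computable.fst)) (computable₂_lengthApprox hS hαc)
  exact hlt.rePred_exists.of_eq fun c => by simp [hkey]

/-- No effective domain-length function for initial-segment functions. -/
theorem no_effective_length (A : Set ℕ) (hAinf : A.Infinite) (hAce : CEset A)
    (θ : ℕ → ℕ →. ℕ) (hθ : QuasiGodel A θ) :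
    ¬ ∃ p : ℕ → ℕ, Computable p ∧
        ∀ i, IsInitSeg A (θ i) → {x : ℕ | (θ i x).Dom} = {m : ℕ | m < p i} := by
  rintro ⟨p, hpc, hp⟩
  obtain ⟨α, hαc, hα⟩ := hAce.exists_computable_ge_mem hAinf
  have hre : REPred fun c : Code =>
      ¬∃ t, (Code.evaln t (Denumerable.ofNat Code (Encodable.encode c)) 0).isSome :=
    (rePred_not_exists_of_effective_length hθ.2.2 hpc hp hαc hα
      (computable₂_evaln_ofNat_isSome 0)).comp Computable.encode
  exact ComputablePred.halting_problem_not_re 0 (hre.of_eq fun c => by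
    rw [Denumerable.ofNat_encode, Code.eval_dom_iff_exists_evaln_isSome])
end

section
/- (Characterization of c.e. sets by S_A functions) Let A ⊆ ℕ be an infinite computably enumerable set. A set C ⊆ ℕ is computably enumerable (i.e. C = ∅ or C = Set.range g for some total computable g : ℕ → ℕ) if and only if there exists r ∈ S_A with C = {z : ℕ | ∃ x, r x = Part.some z}, i.e. C is the range of some (not necessarily total) function in S_A. -/
lemma computable_list_getD (l : List ℕ) (c : ℕ) : Computable (fun n => l.getD n c) := by
  induction l with
  | nil => simpa using Computable.const c
  | cons a l ih =>
    have h : (fun n => (a :: l).getD n c)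
        = fun n : ℕ => Nat.casesOn n a (fun m => l.getD m c) := by
      funext n; cases n <;> rfl
    rw [h]
    exact Computable.nat_casesOn Computable.id (Computable.const a)
      ((ih.comp Computable.snd).to₂)

/-- A set is computably enumerable iff it is the range of some function in `SA A`. -/
theorem ce_iff_range_SA (A : Set ℕ) (hAinf : A.Infinite) (hAce : CEset A) (C : Set ℕ) :
    CEset C ↔ ∃ r ∈ SA A, C = {z : ℕ | ∃ x, r x = Part.some z} := by
  constructor
  · rintro (rfl | ⟨g, hg, rfl⟩)
    · refine ⟨fun _ => Part.none, Or.inr (Or.inl ?_), ?_⟩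
      · ext x; simp [Part.not_none_dom]
      · ext z; simp
    · refine ⟨fun x => Part.some (g x), Or.inl ⟨g, hg, fun _ => rfl⟩, ?_⟩
      ext z; simp [Set.range, eq_comm]
  · rintro ⟨r, hr | hr, rfl⟩
    · obtain ⟨f, hf, hrf⟩ := hr
      right
      refine ⟨f, hf, ?_⟩
      ext z; simp [hrf, Set.range, eq_comm]
    · rcases hr with hempty | ⟨a, _, hdom⟩
      · left
        ext z
        simp only [Set.mem_setOf_eq, Set.mem_empty_iff_false, iff_false]
        rintro ⟨x, hx⟩
        have : x ∈ ({x : ℕ | (r x).Dom} : Set ℕ) := by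
          simp [hx]
        rw [hempty] at this
        exact this
      · -- domain is {m | m < a}; finite range
        classical
        rcases Nat.eq_zero_or_pos a with rfl | ha
        · left
          ext z
          simp only [Set.mem_setOf_eq, Set.mem_empty_iff_false, iff_false]
          rintro ⟨x, hx⟩
          have : x ∈ ({x : ℕ | (r x).Dom} : Set ℕ) := by simp [hx]
          rw [hdom] at this
          exact absurd this (by simp)
        · set t : ℕ → ℕ := fun m => if h : (r m).Dom then (r m).get h else 0 with ht
          have hrt : ∀ m < a, r m = Part.some (t m) := by
            intro m hm
            have hd : (r m).Dom := by
              have : m ∈ ({m : ℕ | m < a} : Set ℕ) := hm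
              rw [← hdom] at this; exact this
            simp only [ht, hd, dif_pos]
            exact Part.eq_some_iff.2 (Part.get_mem hd)
          set l : List ℕ := (List.range a).map t with hl
          right
          refine ⟨fun n => l.getD n (t 0), computable_list_getD l (t 0), ?_⟩
          have hlen : l.length = a := by simp [hl]
          have hget : ∀ n < a, l.getD n (t 0) = t n := by
            intro n hn
            rw [List.getD_eq_getElem l (t 0) (by rw [hlen]; exact hn)]
            simp [hl]
          ext z
          simp only [Set.mem_setOf_eq, Set.mem_range]
          constructor
          · rintro ⟨x, hx⟩
            have hd : (r x).Dom := by rw [hx]; trivial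
            have hxa : x < a := by
              have : x ∈ ({x : ℕ | (r x).Dom} : Set ℕ) := hd
              rw [hdom] at this; exact this
            have : t x = z := by
              have := hrt x hxa
              rw [this] at hx
              exact (Part.some_inj.1 hx)
            exact ⟨x, by rw [hget x hxa, this]⟩
          · rintro ⟨n, hn⟩
            by_cases hna : n < a
            · rw [hget n hna] at hn
              exact ⟨n, by rw [hrt n hna, hn]⟩
            · have : l.getD n (t 0) = t 0 := by
                apply List.getD_eq_default
                rw [hlen]; omega
              rw [this] at hn
              exact ⟨0, by rw [hrt 0 ha, hn]⟩
end

section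
/- (1-completeness of the halting-type problems) Let A ⊆ ℕ be an infinite computably enumerable set, let θ be a quasi-Gödel numbering of S_A, and set W^A_i = {w | ∃ x, θ i x = Part.some w}. Define K^A = {i | i ∈ W^A_i}, K^A_0 = {Nat.pair i x | x ∈ W^A_i}, K^A_1 = {Nat.pair i x | (θ i x).Dom}, and K^A_2 = {i | (θ i i).Dom}. Then each of K^A, K^A_0, K^A_1, K^A_2 is 1-complete: it is computably enumerable, and every computably enumerable set B ⊆ ℕ one-one reduces to it (there is an injective total computable f : ℕ → ℕ with n ∈ B ↔ f n ∈ the set, for all n). -/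
/-- `WA θ i` is the `i`-th computably enumerable set, the range of `θ i`. -/
def WA (θ : ℕ → ℕ →. ℕ) (i : ℕ) : Set ℕ := {w : ℕ | ∃ x, θ i x = Part.some w}

/-- A set of naturals is 1-complete: it is c.e. and every c.e. set one-one reduces
to it. -/
def OneComplete (S : Set ℕ) : Prop :=
  CEset S ∧ ∀ B : Set ℕ, CEset B → OneOneReducible (· ∈ B) (· ∈ S)

/-!
Fix a c.e. set `B` and a computable strictly increasing `β` with values in `A`. For `n, c ∈ ℕ`
let `r n c := stepPart (n ∈ B) (β n) c`: the function that is `c` on `[0, β n)` and `y ↦ y - β n`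
beyond, cut down to `[0, β n)` unless `n ∈ B`. Every `r n c` lies in `S_A`, and the extended
graphs are enumerable uniformly in `(n, c)`: the points beyond `β n` are released once `n` shows
up in `B`. So (QGN II) gives a computable `v` with `θ (v n c) = r n c`, injective because `r n c`
determines `(n, c)`. Then `n ∈ B` iff `θ (v n 0)` is defined at `β n` (for `K^A_1`), iff `1` is a
value of `θ (v n 0)` (for `K^A_0`), and, for a `c` chosen computably with `β n ≤ v n c` resp.
`v n c ≠ c`, iff `θ (v n c)` is defined at, resp. takes the value, its own index (for `K^A_2`,
`K^A`). The four sets are c.e. because (QGN I) enumerates the graph of the universal function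
of `θ`.
-/

open Function

theorem Computable.ite {α σ : Type*} [Primcodable α] [Primcodable σ] {c : α → Prop}
    [DecidablePred c] {f g : α → σ} (hc : ComputablePred c) (hf : Computable f)
    (hg : Computable g) : Computable fun a => if c a then f a else g a := by
  simpa [Bool.cond_decide] using hc.decide.cond hf hg

theorem ComputablePred.exists_computable_choice {P : ℕ → ℕ → Prop}
    (hP : ComputablePred fun p : ℕ × ℕ => P p.1 p.2) (hex : ∀ n, ∃ c, P n c) :
    ∃ f : ℕ → ℕ, Computable f ∧ ∀ n, P n (f n) := by
  classical
  exact ⟨fun n => Nat.find (hex n), Computable.find hP hex, fun n => Nat.find_spec (hex n)⟩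

theorem Computable.iterate {α : Type*} [Primcodable α] {f : α → α} (hf : Computable f) (a : α) :
    Computable fun n => f^[n] a :=
  (Computable.nat_rec Computable.id (Computable.const a) (hf.comp (Computable.snd.comp
    Computable.snd)).to₂).of_eq fun n => by
      induction n with
      | zero => rfl
      | succ n ih => simp only [iterate_succ_apply', ← ih]; rfl

theorem CEset.of_option_enum {S : Set ℕ} {e : ℕ → Option ℕ} (he : Computable e)
    (hS : ∀ n, n ∈ S ↔ ∃ t, e t = some n) (hne : S.Nonempty) : CEset S := by
  obtain ⟨n₀, hn₀⟩ := hne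
  refine Or.inr ⟨fun t => (e t).getD n₀, he.option_getD (Computable.const n₀), ?_⟩
  ext n
  refine ⟨fun hn => ?_, ?_⟩
  · obtain ⟨t, ht⟩ := (hS n).1 hn
    exact ⟨t, by simp [ht]⟩
  · rintro ⟨t, rfl⟩
    dsimp only
    cases ht : e t with
    | none => simpa using hn₀
    | some m => simpa using (hS m).2 ⟨t, ht⟩

theorem CEset.exists_mem_iff_exists_eq_succ {B : Set ℕ} (hB : CEset B) :
    ∃ g : ℕ → ℕ, Computable g ∧ ∀ n, n ∈ B ↔ ∃ u, g u = n + 1 := by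
  rcases hB with rfl | ⟨g, hg, rfl⟩
  · exact ⟨fun _ => 0, Computable.const 0, fun n => by simp⟩
  · exact ⟨fun u => g u + 1, Computable.succ.comp hg, fun n => by simp⟩

theorem CEset.exists_computable_strictMono_mem {A : Set ℕ} (hAinf : A.Infinite) (hAce : CEset A) :
    ∃ β : ℕ → ℕ, Computable β ∧ StrictMono β ∧ (∀ n, β n ∈ A) ∧ ∀ n, 0 < β n := by
  obtain ⟨α, hα, rfl⟩ := hAce.resolve_left hAinf.nonempty.ne_empty
  obtain ⟨t, htc, ht⟩ := ComputablePred.exists_computable_choice (P := fun p t => p < α t)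
    (Primrec.nat_lt.decide.to_comp.comp Computable.fst (hα.comp Computable.snd)).computablePred
    fun p => by simpa using hAinf.exists_gt p
  set δ := fun p => α (t p)
  have hδ : ∀ p, p < δ p := ht
  refine ⟨fun n => δ^[n + 1] 0, ((hα.comp htc).iterate 0).comp Computable.succ,
    strictMono_nat_of_lt_succ fun n => ?_, fun n => ?_, fun n => ?_⟩
  · rw [iterate_succ_apply' δ (n + 1)]; exact hδ _
  · dsimp only; rw [iterate_succ_apply']; exact ⟨_, rfl⟩
  · dsimp only; rw [iterate_succ_apply']; exact (Nat.zero_le _).trans_lt (hδ _)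

def KA (θ : ℕ → ℕ →. ℕ) : Set ℕ := {i | i ∈ WA θ i}

def KA₀ (θ : ℕ → ℕ →. ℕ) : Set ℕ := {n | ∃ i x, x ∈ WA θ i ∧ n = Nat.pair i x}

def KA₁ (θ : ℕ → ℕ →. ℕ) : Set ℕ := {n | ∃ i x, (θ i x).Dom ∧ n = Nat.pair i x}

def KA₂ (θ : ℕ → ℕ →. ℕ) : Set ℕ := {i | (θ i i).Dom}

@[simp] theorem pair_mem_KA₀ {θ : ℕ → ℕ →. ℕ} {i x : ℕ} : Nat.pair i x ∈ KA₀ θ ↔ x ∈ WA θ i := by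
  simp [KA₀, Nat.pair_eq_pair]

@[simp] theorem pair_mem_KA₁ {θ : ℕ → ℕ →. ℕ} {i x : ℕ} : Nat.pair i x ∈ KA₁ θ ↔ (θ i x).Dom := by
  simp [KA₁, Nat.pair_eq_pair]

namespace QGN1

variable {θ : ℕ → ℕ →. ℕ}

theorem exists_graph_enum (hθ : QGN1 θ) :
    ∃ u : ℕ → Option (ℕ × ℕ × ℕ), Computable u ∧
      ∀ i x z, θ i x = Part.some z ↔ ∃ t, u t = some (i, x, z) := by
  obtain ⟨h, hhc, hrange⟩ := hθ
  have unpair₁ : Computable fun m : ℕ => m.unpair.1 := Computable.fst.comp Computable.unpair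
  have unpair₂ : Computable fun m : ℕ => m.unpair.2 := Computable.snd.comp Computable.unpair
  refine ⟨fun t => if (h t).unpair.2 = 0 then none else
      some ((h t).unpair.1.unpair.1, (h t).unpair.1.unpair.2, (h t).unpair.2 - 1), ?_, ?_⟩
  · exact Computable.ite
      (Primrec.eq.decide.to_comp.comp (unpair₂.comp hhc) (Computable.const 0)).computablePred
      (Computable.const none) (Computable.option_some.comp <|
        (unpair₁.comp (unpair₁.comp hhc)).pair <| (unpair₂.comp (unpair₁.comp hhc)).pair <|
          Primrec.nat_sub.to_comp.comp (unpair₂.comp hhc) (Computable.const 1))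
  · intro i x z
    constructor
    · intro hz
      obtain ⟨t, ht⟩ : Nat.pair (Nat.pair i x) (z + 1) ∈ Set.range h :=
        hrange ▸ Or.inr ⟨i, x, z, hz, rfl⟩
      exact ⟨t, by simp [ht]⟩
    · rintro ⟨t, ht⟩
      rcases (hrange ▸ Set.mem_range_self t : h t ∈ _) with ⟨w, hw⟩ | ⟨i', x', z', hz', hw⟩
      · simp [hw] at ht
      · simp only [hw, Nat.unpair_pair, Nat.add_sub_cancel, Nat.add_one_ne_zero, if_false,
          Option.some.injEq, Prod.mk.injEq] at ht
        obtain ⟨rfl, rfl, rfl⟩ := ht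
        exact hz'

theorem ceset_of_graph (hθ : QGN1 θ) {P : ℕ × ℕ × ℕ → Prop} [DecidablePred P]
    {f : ℕ × ℕ × ℕ → ℕ} (hP : ComputablePred P) (hf : Computable f) {S : Set ℕ}
    (hS : ∀ n, n ∈ S ↔ ∃ i x z, θ i x = Part.some z ∧ P (i, x, z) ∧ n = f (i, x, z))
    (hne : S.Nonempty) : CEset S := by
  obtain ⟨u, hu, hθu⟩ := hθ.exists_graph_enum
  refine CEset.of_option_enum (e := fun t => (u t).bind fun p => if P p then some (f p) else none)
    (hu.option_bind (Computable.ite (hP.decide.comp Computable.snd).computablePred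
      (Computable.option_some.comp (hf.comp Computable.snd)) (Computable.const none)).to₂)
    (fun n => ?_) hne
  simp only [hS, Option.bind_eq_some_iff, Option.ite_none_right_eq_some, Option.some.injEq]
  constructor
  · rintro ⟨i, x, z, hz, hP, rfl⟩
    obtain ⟨t, ht⟩ := (hθu i x z).1 hz
    exact ⟨t, _, ht, hP, rfl⟩
  · rintro ⟨t, ⟨i, x, z⟩, ht, hP, rfl⟩
    exact ⟨i, x, z, (hθu i x z).2 ⟨t, ht⟩, hP, rfl⟩

end QGN1

section CE

variable {θ : ℕ → ℕ →. ℕ} {j : ℕ}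

theorem ceset_KA (hθ : QGN1 θ) (hj : ∀ x, θ j x = Part.some x) : CEset (KA θ) :=
  hθ.ceset_of_graph (P := fun p => p.2.2 = p.1) (f := fun p => p.1)
    (Primrec.eq.comp (Primrec.snd.comp Primrec.snd) Primrec.fst).computablePred Computable.fst
    (fun n => by simp [KA, WA]) ⟨j, j, hj j⟩

theorem ceset_KA₀ (hθ : QGN1 θ) (hj : ∀ x, θ j x = Part.some x) : CEset (KA₀ θ) :=
  hθ.ceset_of_graph (P := fun _ => True) (f := fun p => Nat.pair p.1 p.2.2)
    (Computable.const true).computablePred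
    (Primrec₂.natPair.to_comp.comp Computable.fst (Computable.snd.comp Computable.snd))
    (fun n => by
      simp only [KA₀, WA, Set.mem_ofPred_eq, true_and]
      exact ⟨fun ⟨i, x, ⟨y, h⟩, e⟩ => ⟨i, y, x, h, e⟩, fun ⟨i, y, x, h, e⟩ => ⟨i, x, ⟨y, h⟩, e⟩⟩)
    ⟨Nat.pair j 0, by simpa [WA] using ⟨0, hj 0⟩⟩

theorem ceset_KA₁ (hθ : QGN1 θ) (hj : ∀ x, θ j x = Part.some x) : CEset (KA₁ θ) :=
  hθ.ceset_of_graph (P := fun _ => True) (f := fun p => Nat.pair p.1 p.2.1)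
    (Computable.const true).computablePred
    (Primrec₂.natPair.to_comp.comp Computable.fst (Computable.fst.comp Computable.snd))
    (fun n => by simp [KA₁, Part.dom_iff_mem, Part.eq_some_iff]) ⟨Nat.pair j 0, by simp [hj]⟩

theorem ceset_KA₂ (hθ : QGN1 θ) (hj : ∀ x, θ j x = Part.some x) : CEset (KA₂ θ) :=
  hθ.ceset_of_graph (P := fun p => p.2.1 = p.1) (f := fun p => p.1)
    (Primrec.eq.comp (Primrec.fst.comp Primrec.snd) Primrec.fst).computablePred Computable.fst
    (fun n => by simp [KA₂, Part.dom_iff_mem, Part.eq_some_iff]) ⟨j, by simp [KA₂, hj]⟩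

end CE

def stepVal (a c y : ℕ) : ℕ := if y < a then c else y - a

def stepPart (P : Prop) (a c : ℕ) : ℕ →. ℕ := fun y => ⟨P ∨ y < a, fun _ => stepVal a c y⟩

section StepPart

variable {P P' : Prop} {A : Set ℕ} {a a' c c' y z : ℕ}

theorem Computable.stepVal {α : Type*} [Primcodable α] {a c y : α → ℕ} (ha : Computable a)
    (hc : Computable c) (hy : Computable y) : Computable fun x => stepVal (a x) (c x) (y x) :=
  Computable.ite (Primrec.nat_lt.decide.to_comp.comp hy ha).computablePred hc
    (Primrec.nat_sub.to_comp.comp hy ha)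

theorem stepPart_eq_some_iff : stepPart P a c y = Part.some z ↔ (P ∨ y < a) ∧ stepVal a c y = z :=
  Part.eq_some_iff.trans <| Part.mem_mk_iff.trans exists_prop

theorem stepPart_mem_SA (P : Prop) (ha : a ∈ A) (c : ℕ) : stepPart P a c ∈ SA A := by
  by_cases hP : P
  · exact Or.inl ⟨stepVal a c, (Computable.const a).stepVal (Computable.const c) Computable.id,
      fun y => stepPart_eq_some_iff.2 ⟨Or.inl hP, rfl⟩⟩
  · exact Or.inr (Or.inr ⟨a, ha, Set.ext fun y => by simp [stepPart, hP]⟩)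

theorem exists_stepPart_eq_some_iff (ha : 0 < a) :
    (∃ y, stepPart P a c y = Part.some z) ↔ P ∨ z = c := by
  simp only [stepPart_eq_some_iff, stepVal]
  constructor
  · rintro ⟨y, hy, rfl⟩
    by_cases hya : y < a
    · exact Or.inr (if_pos hya)
    · exact Or.inl (hy.resolve_right hya)
  · rintro (hP | rfl)
    · exact ⟨z + a, Or.inl hP, by simp⟩
    · exact ⟨0, Or.inr ha, if_pos ha⟩

theorem stepPart_inj (ha : 0 < a) (ha' : 0 < a') (h : stepPart P a c = stepPart P' a' c') :
    a = a' ∧ c = c' := by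
  have hdom : ∀ y, P ∨ y < a ↔ P' ∨ y < a' := fun y => (congrArg Part.Dom (congrFun h y)).to_iff
  have hval : ∀ y, P ∨ y < a → stepVal a c y = stepVal a' c' y := fun y hy =>
    (stepPart_eq_some_iff.1 (h ▸ stepPart_eq_some_iff.2 ⟨hy, rfl⟩)).2.symm
  have hc := hval 0 (Or.inr ha)
  simp only [stepVal, if_pos ha, if_pos ha'] at hc
  refine ⟨?_, hc⟩
  -- the domains locate `a` and `a'` unless both functions are total; then the values at `a + a'` do
  have h₁ := hdom a
  have h₂ := hdom a'
  by_cases hP : P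
  · have h₃ := hval (a + a') (Or.inl hP)
    simp only [stepVal] at h₃
    grind
  · grind

/-- Stage `⟨t + 1, y⟩` lists the graph point at `y` once it is known to be in the domain (`y < a`
or the witness `w t` holds); all other stages list the padding point `⟨y, 0⟩`. -/
def stepEnum (w : ℕ → Prop) [DecidablePred w] (a c s : ℕ) : ℕ :=
  if 0 < s.unpair.1 ∧ (w (s.unpair.1 - 1) ∨ s.unpair.2 < a) then
    Nat.pair s.unpair.2 (stepVal a c s.unpair.2 + 1)
  else Nat.pair s.unpair.2 0

theorem range_stepEnum (w : ℕ → Prop) [DecidablePred w] (a c : ℕ) :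
    Set.range (stepEnum w a c) = graphE (stepPart (∃ u, w u) a c) := by
  ext m
  simp only [Set.mem_range, graphE, Set.mem_union, Set.mem_ofPred_eq, stepPart_eq_some_iff]
  constructor
  · rintro ⟨s, rfl⟩
    unfold stepEnum
    split_ifs with hs
    · exact Or.inr ⟨_, _, ⟨hs.2.imp_left fun hw => ⟨_, hw⟩, rfl⟩, rfl⟩
    · exact Or.inl ⟨_, rfl⟩
  · rintro (⟨y, rfl⟩ | ⟨y, z, ⟨hy, rfl⟩, rfl⟩)
    · exact ⟨Nat.pair 0 y, by simp [stepEnum]⟩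
    · obtain ⟨t, ht⟩ : ∃ t, w t ∨ y < a := hy.elim (fun ⟨u, hu⟩ => ⟨u, Or.inl hu⟩)
        fun hya => ⟨0, Or.inr hya⟩
      exact ⟨Nat.pair (t + 1) y, by simp [stepEnum, ht]⟩

theorem Computable.stepEnum {α : Type*} [Primcodable α] {w : α → ℕ → Prop}
    [∀ x, DecidablePred (w x)] {a c s : α → ℕ} (hw : ComputablePred fun p : α × ℕ => w p.1 p.2)
    (ha : Computable a) (hc : Computable c) (hs : Computable s) :
    Computable fun x => stepEnum (w x) (a x) (c x) (s x) := by
  have ht : Computable fun x => (s x).unpair.1 := Computable.fst.comp (Computable.unpair.comp hs)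
  have hy : Computable fun x => (s x).unpair.2 := Computable.snd.comp (Computable.unpair.comp hs)
  have hcond : Computable fun x =>
      decide (0 < (s x).unpair.1 ∧ (w x ((s x).unpair.1 - 1) ∨ (s x).unpair.2 < a x)) := by
    simpa using Primrec.and.to_comp.comp
      (Primrec.nat_lt.decide.to_comp.comp (Computable.const 0) ht)
      (Primrec.or.to_comp.comp
        (hw.decide.comp (Computable.id.pair (Primrec.nat_sub.to_comp.comp ht (Computable.const 1))))
        (Primrec.nat_lt.decide.to_comp.comp hy ha))
  exact Computable.ite hcond.computablePred
    (Primrec₂.natPair.to_comp.comp hy (Computable.succ.comp (ha.stepVal hc hy)))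
    (Primrec₂.natPair.to_comp.comp hy (Computable.const 0))

end StepPart

theorem injective2_of_eq_stepPart {θ : ℕ → ℕ →. ℕ} {B : Set ℕ} {β : ℕ → ℕ} {v : ℕ → ℕ → ℕ}
    (hβ : Injective β) (hβpos : ∀ n, 0 < β n)
    (hv : ∀ n c, θ (v n c) = stepPart (n ∈ B) (β n) c) : Injective2 v := fun n m c d h => by
  have := stepPart_inj (hβpos n) (hβpos m) (by rw [← hv, ← hv, h])
  exact ⟨hβ this.1, this.2⟩

theorem exists_indices_stepPart {A B : Set ℕ} {θ : ℕ → ℕ →. ℕ} (hAinf : A.Infinite)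
    (hAce : CEset A) (hθ : QGN2 A θ) (hB : CEset B) :
    ∃ β : ℕ → ℕ, ∃ v : ℕ → ℕ → ℕ, Computable β ∧ Computable₂ v ∧ Injective2 v ∧
      (∀ n, 0 < β n) ∧ ∀ n c, θ (v n c) = stepPart (n ∈ B) (β n) c := by
  obtain ⟨β, hβc, hβmono, hβA, hβpos⟩ := hAce.exists_computable_strictMono_mem hAinf
  obtain ⟨g, hgc, hg⟩ := hB.exists_mem_iff_exists_eq_succ
  have unpair₁ : Computable fun m : ℕ => m.unpair.1 := Computable.fst.comp Computable.unpair
  have unpair₂ : Computable fun m : ℕ => m.unpair.2 := Computable.snd.comp Computable.unpair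
  obtain ⟨v, hvc, hv⟩ := hθ
    (fun p s => stepEnum (fun u => g u = p.unpair.1 + 1) (β p.unpair.1) p.unpair.2 s)
    (Computable.stepEnum (Primrec.eq.decide.to_comp.comp (hgc.comp Computable.snd)
        (Computable.succ.comp (unpair₁.comp (Computable.fst.comp Computable.fst)))).computablePred
      (hβc.comp (unpair₁.comp Computable.fst)) (unpair₂.comp Computable.fst) Computable.snd)
  have hv' : ∀ n c, θ (v (Nat.pair n c)) = stepPart (n ∈ B) (β n) c := fun n c => by
    rw [show (n ∈ B) = ∃ u, g u = n + 1 from propext (hg n)]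
    exact hv _ _ (stepPart_mem_SA _ (hβA n) c) (by simpa using range_stepEnum _ (β n) c)
  exact ⟨β, fun n c => v (Nat.pair n c), hβc, hvc.comp₂ Primrec₂.natPair.to_comp,
    injective2_of_eq_stepPart hβmono.injective hβpos hv', hβpos, hv'⟩

section Reductions

variable {θ : ℕ → ℕ →. ℕ} {B : Set ℕ} {β : ℕ → ℕ} {v : ℕ → ℕ → ℕ}

theorem oneOneReducible_KA₀ (hvc : Computable₂ v) (hv_inj : Injective2 v) (hβpos : ∀ n, 0 < β n)
    (hv : ∀ n c, θ (v n c) = stepPart (n ∈ B) (β n) c) : OneOneReducible (· ∈ B) (· ∈ KA₀ θ) := by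
  refine ⟨fun n => Nat.pair (v n 0) 1, ?_, fun n m h => ?_, fun n => ?_⟩
  · exact Primrec₂.natPair.to_comp.comp (hvc.comp Computable.id (Computable.const 0))
      (Computable.const 1)
  · exact (hv_inj (Nat.pair_eq_pair.1 h).1).1
  · simp [WA, hv, exists_stepPart_eq_some_iff (hβpos n)]

theorem oneOneReducible_KA₁ (hβc : Computable β) (hvc : Computable₂ v) (hv_inj : Injective2 v)
    (hv : ∀ n c, θ (v n c) = stepPart (n ∈ B) (β n) c) :
    OneOneReducible (· ∈ B) (· ∈ KA₁ θ) := by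
  refine ⟨fun n => Nat.pair (v n 0) (β n), ?_, fun n m h => ?_, fun n => ?_⟩
  · exact Primrec₂.natPair.to_comp.comp (hvc.comp Computable.id (Computable.const 0)) hβc
  · exact (hv_inj (Nat.pair_eq_pair.1 h).1).1
  · simp [hv, stepPart]

theorem oneOneReducible_KA₂ (hβc : Computable β) (hvc : Computable₂ v) (hv_inj : Injective2 v)
    (hv : ∀ n c, θ (v n c) = stepPart (n ∈ B) (β n) c) :
    OneOneReducible (· ∈ B) (· ∈ KA₂ θ) := by
  obtain ⟨c, hcc, hc⟩ := ComputablePred.exists_computable_choice (P := fun n c => β n ≤ v n c)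
    (Primrec.nat_le.decide.to_comp.comp (hβc.comp Computable.fst) hvc).computablePred
    fun n => by
      obtain ⟨_, ⟨c, rfl⟩, hc⟩ := (Set.infinite_range_of_injective (hv_inj.right n)).exists_gt (β n)
      exact ⟨c, hc.le⟩
  refine ⟨fun n => v n (c n), hvc.comp Computable.id hcc, fun n m h => (hv_inj h).1, fun n => ?_⟩
  simp [KA₂, hv, stepPart, not_lt.2 (hc n)]

theorem oneOneReducible_KA {j : ℕ} (hj : ¬ (θ j 0).Dom) (hvc : Computable₂ v)
    (hv_inj : Injective2 v) (hβpos : ∀ n, 0 < β n)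
    (hv : ∀ n c, θ (v n c) = stepPart (n ∈ B) (β n) c) : OneOneReducible (· ∈ B) (· ∈ KA θ) := by
  -- such `c` exist: `θ (v n j)` is defined at `0` and `θ j` is not
  obtain ⟨c, hcc, hc⟩ := ComputablePred.exists_computable_choice (P := fun n c => v n c ≠ c)
    (Primrec.eq.decide.to_comp.comp hvc Computable.snd).computablePred.not
    fun n => ⟨j, fun h => hj (h ▸ hv n j ▸ Or.inr (hβpos n))⟩
  refine ⟨fun n => v n (c n), hvc.comp Computable.id hcc, fun n m h => (hv_inj h).1, fun n => ?_⟩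
  simp [KA, WA, hv, exists_stepPart_eq_some_iff (hβpos n), hc n]

end Reductions

/-- 1-completeness of the halting-type problems `K^A`, `K^A_0`, `K^A_1`, `K^A_2`. -/
theorem halting_problems_one_complete (A : Set ℕ) (hAinf : A.Infinite) (hAce : CEset A)
    (θ : ℕ → ℕ →. ℕ) (hθ : QuasiGodel A θ) :
    OneComplete {i : ℕ | i ∈ WA θ i} ∧
    OneComplete {n : ℕ | ∃ i x, x ∈ WA θ i ∧ n = Nat.pair i x} ∧
    OneComplete {n : ℕ | ∃ i x, (θ i x).Dom ∧ n = Nat.pair i x} ∧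
    OneComplete {i : ℕ | (θ i i).Dom} := by
  obtain ⟨hrange, hθ₁, hθ₂⟩ := hθ
  obtain ⟨j₀, hj₀⟩ : (fun x => Part.some x : ℕ →. ℕ) ∈ Set.range θ :=
    hrange ▸ Or.inl ⟨id, Computable.id, fun _ => rfl⟩
  obtain ⟨j, hj⟩ : (fun _ => Part.none : ℕ →. ℕ) ∈ Set.range θ :=
    hrange ▸ Or.inr (Or.inl (Set.ext fun _ => by simp))
  refine ⟨⟨ceset_KA hθ₁ (congrFun hj₀), fun B hB => ?_⟩,
    ⟨ceset_KA₀ hθ₁ (congrFun hj₀), fun B hB => ?_⟩, ⟨ceset_KA₁ hθ₁ (congrFun hj₀), fun B hB => ?_⟩,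
    ⟨ceset_KA₂ hθ₁ (congrFun hj₀), fun B hB => ?_⟩⟩ <;>
    obtain ⟨β, v, hβc, hvc, hv_inj, hβpos, hv⟩ := exists_indices_stepPart hAinf hAce hθ₂ hB
  · exact oneOneReducible_KA (j := j) (by simp [hj]) hvc hv_inj hβpos hv
  · exact oneOneReducible_KA₀ hvc hv_inj hβpos hv
  · exact oneOneReducible_KA₁ hβc hvc hv_inj hv
  · exact oneOneReducible_KA₂ hβc hvc hv_inj hv
end
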